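/- arXiv:2303.12555 — 10 statements merged into one kernel-verified Lean document; each statement's English description precedes it below -/
import Mathlib

section
/- Let X, Y1, Y2 be Hilbert spaces, F : X → Y1' and T : X → Y2' bounded linear operators, X0 := ker T. If F restricted to X0 is boundedly invertible onto Y1' and T is surjective, then the combined operator G := (F, T) : X → Y1' × Y2' is boundedly invertible. -/
open NormedSpace

namespace LinearMap

variable {R M N₁ N₂ : Type*} [Ring R] [AddCommGroup M] [AddCommGroup N₁] [AddCommGroup N₂]
  [Module R M] [Module R N₁] [Module R N₂]

theorem injective_prod_of_injective_domRestrict_ker (f : M →ₗ[R] N₁) (t : M →ₗ[R] N₂)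
    (hf : Function.Injective (f.domRestrict (ker t))) : Function.Injective (f.prod t) := by
  rw [← ker_eq_bot, ker_eq_bot']
  intro x hx
  have hxt : x ∈ ker t := congrArg Prod.snd hx
  have hx0 : (⟨x, hxt⟩ : ker t) = 0 := hf (by simpa using congrArg Prod.fst hx)
  exact congrArg Subtype.val hx0

theorem surjective_prod_of_surjective_domRestrict_ker (f : M →ₗ[R] N₁) (t : M →ₗ[R] N₂)
    (hf : Function.Surjective (f.domRestrict (ker t))) (ht : Function.Surjective t) :
    Function.Surjective (f.prod t) := by
  rintro ⟨a, b⟩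
  obtain ⟨x, rfl⟩ := ht b
  obtain ⟨⟨k, hk⟩, hfk⟩ := hf (a - f x)
  refine ⟨k + x, ?_⟩
  simp only [domRestrict_apply] at hfk
  simp [hfk, mem_ker.1 hk]

theorem bijective_prod_of_bijective_domRestrict_ker (f : M →ₗ[R] N₁) (t : M →ₗ[R] N₂)
    (hf : Function.Bijective (f.domRestrict (ker t))) (ht : Function.Surjective t) :
    Function.Bijective (f.prod t) :=
  ⟨injective_prod_of_injective_domRestrict_ker f t hf.1,
    surjective_prod_of_surjective_domRestrict_ker f t hf.2 ht⟩

end LinearMap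

theorem combined_operator_boundedly_invertible_general
    {X Y1 Y2 : Type*}
    [NormedAddCommGroup X] [InnerProductSpace ℝ X] [CompleteSpace X]
    [NormedAddCommGroup Y1] [InnerProductSpace ℝ Y1]
    [NormedAddCommGroup Y2] [InnerProductSpace ℝ Y2]
    (F : X →L[ℝ] StrongDual ℝ Y1) (T : X →L[ℝ] StrongDual ℝ Y2)
    (F0 : ↥(LinearMap.ker (T : X →ₗ[ℝ] StrongDual ℝ Y2)) ≃L[ℝ] StrongDual ℝ Y1)
    (hF0 : ∀ x : ↥(LinearMap.ker (T : X →ₗ[ℝ] StrongDual ℝ Y2)), F0 x = F (x : X))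
    (hT : Function.Surjective T) :
    ∃ G : X ≃L[ℝ] (StrongDual ℝ Y1 × StrongDual ℝ Y2),
      (G : X →L[ℝ] (StrongDual ℝ Y1 × StrongDual ℝ Y2)) = F.prod T := by
  have hF : Function.Bijective ((F : X →ₗ[ℝ] StrongDual ℝ Y1).domRestrict
      (LinearMap.ker (T : X →ₗ[ℝ] StrongDual ℝ Y2))) := by
    convert F0.bijective using 1
    exact funext fun x => (hF0 x).symm
  obtain ⟨hinj, hsurj⟩ := LinearMap.bijective_prod_of_bijective_domRestrict_ker _ _ hF hT
  -- Bounded inverse by the open mapping theorem: `X` and the duals are Banach spaces.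
  exact ⟨.ofBijective (F.prod T) (LinearMap.ker_eq_bot.2 hinj) (LinearMap.range_eq_top.2 hsurj),
    rfl⟩

/-- If `F` restricted to `ker T` is boundedly invertible onto `Y1'` and `T` is surjective,
then `G := (F, T) : X → Y1' × Y2'` is boundedly invertible. -/
theorem combined_operator_boundedly_invertible
    {X Y1 Y2 : Type*}
    [NormedAddCommGroup X] [InnerProductSpace ℝ X] [CompleteSpace X]
    [NormedAddCommGroup Y1] [InnerProductSpace ℝ Y1] [CompleteSpace Y1]
    [NormedAddCommGroup Y2] [InnerProductSpace ℝ Y2] [CompleteSpace Y2]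
    (F : X →L[ℝ] StrongDual ℝ Y1) (T : X →L[ℝ] StrongDual ℝ Y2)
    (F0 : ↥(LinearMap.ker (T : X →ₗ[ℝ] StrongDual ℝ Y2)) ≃L[ℝ] StrongDual ℝ Y1)
    (hF0 : ∀ x : ↥(LinearMap.ker (T : X →ₗ[ℝ] StrongDual ℝ Y2)), F0 x = F (x : X))
    (hT : Function.Surjective T) :
    ∃ G : X ≃L[ℝ] (StrongDual ℝ Y1 × StrongDual ℝ Y2),
      (G : X →L[ℝ] (StrongDual ℝ Y1 × StrongDual ℝ Y2)) = F.prod T :=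
  combined_operator_boundedly_invertible_general F T F0 hF0 hT
end

section
/- Let G ∈ Lis(X, Y') between Hilbert spaces, f ∈ Y', u = G⁻¹ f, and X^δ, Y^δ closed nonzero proper subspaces of X and Y respectively. Define γ^δ := inf over nonzero w ∈ X^δ of [sup over nonzero v ∈ Y^δ of |(G w)(v)|/‖v‖_Y] / ‖G w‖_{Y'}, and assume γ^δ > 0. Let u^δ minimize over w ∈ X^δ the discretized residual (1/2) sup over nonzero v ∈ Y^δ of |(G w − f)(v)|² / ‖v‖_Y². Then with |||·|||_X := ‖G ·‖_{Y'}, it holds that |||u − u^δ|||_X ≤ (1/γ^δ) · inf over w ∈ X^δ of |||u − w|||_X. -/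
/-!
Transport everything to `Y` by the Riesz map: `T = toDual⁻¹ ∘ G` is an isometry for `|||·|||_X`,
the discretized dual norm of a functional is the norm of the orthogonal projection `P` onto `Y^δ`
of its Riesz representative, and `γ^δ` is the best constant in `γ ‖T w‖ ≤ ‖P T w‖` on `X^δ`.
Minimality of the residual gives the Galerkin orthogonality `P (T u - T u^δ) ⊥ P T(X^δ)`.
Splitting `q = T u - T u^δ` and `d = T u^δ - T w` into their components in `Y^δ` and `(Y^δ)ᗮ`,
`‖q + d‖² ≥ ‖P q‖² + ‖P d‖² + (‖q^⊥‖ - ‖d^⊥‖)²`, and AM-GM together with `γ² ‖d‖² ≤ ‖P d‖²`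
bounds this from below by `γ² ‖q‖²`.
-/

open scoped RealInnerProductSpace

lemma mul_le_of_eq_iInf_div {ι : Sort*} {γ : ℝ} {F N : ι → ℝ} (hF : ∀ i, 0 ≤ F i)
    (hN : ∀ i, 0 < N i) (hγ : γ = ⨅ i, F i / N i) (i : ι) : γ * N i ≤ F i := by
  rw [← le_div_iff₀ (hN i), hγ]
  exact ciInf_le ⟨0, Set.forall_mem_range.2 fun j => div_nonneg (hF j) (hN j).le⟩ i

lemma sq_mul_add_sq_le_of_sq_mul_le {γ a b c e : ℝ} (hγ0 : 0 ≤ γ) (hγ1 : γ ≤ 1)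
    (hce : γ ^ 2 * (c ^ 2 + e ^ 2) ≤ c ^ 2) :
    γ ^ 2 * (a ^ 2 + b ^ 2) ≤ a ^ 2 + c ^ 2 + (b - e) ^ 2 := by
  set s := 1 - γ ^ 2
  have hs : 0 ≤ s := by nlinarith
  have he : e ^ 2 ≤ s * (c ^ 2 + e ^ 2) := by linarith
  -- AM-GM in the form `2 b e ≤ s b² + e² / s`, cleared of the denominator.
  have h : 0 ≤ s * b ^ 2 + c ^ 2 + e ^ 2 - 2 * b * e := by
    rcases hs.eq_or_lt with hs0 | hspos
    · obtain rfl : e = 0 := by nlinarith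
      nlinarith
    · refine nonneg_of_mul_nonneg_right ?_ hspos
      nlinarith [sq_nonneg (s * b - e)]
  nlinarith [mul_nonneg hs (sq_nonneg a)]

namespace Submodule

variable {E : Type*} [NormedAddCommGroup E] [InnerProductSpace ℝ E]

lemma inner_sub_eq_zero_of_forall_norm_sub_le {W : Submodule ℝ E} {a b : E} (hb : b ∈ W)
    (hmin : ∀ w ∈ W, ‖a - b‖ ≤ ‖a - w‖) : ∀ w ∈ W, ⟪a - b, w⟫ = 0 := by
  refine (W.norm_eq_iInf_iff_real_inner_eq_zero hb).1 (le_antisymm ?_ ?_)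
  · exact le_ciInf fun w => hmin w w.2
  · exact ciInf_le ⟨0, Set.forall_mem_range.2 fun _ => norm_nonneg _⟩ (⟨b, hb⟩ : W)

variable (K : Submodule ℝ E) [K.HasOrthogonalProjection]

lemma inner_starProjection_left_of_mem {v : E} (hv : v ∈ K) (g : E) :
    ⟪K.starProjection g, v⟫ = ⟪g, v⟫ := by
  rw [inner_starProjection_left_eq_right, starProjection_eq_self_iff.2 hv]

lemma abs_inner_le_norm_starProjection_mul {v : E} (hv : v ∈ K) (g : E) :
    |⟪g, v⟫| ≤ ‖K.starProjection g‖ * ‖v‖ := by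
  rw [← K.inner_starProjection_left_of_mem hv]
  exact abs_real_inner_le_norm _ _

lemma exists_abs_inner_eq_norm_starProjection_mul (hK : K ≠ ⊥) (g : E) :
    ∃ v ∈ K, v ≠ 0 ∧ |⟪g, v⟫| = ‖K.starProjection g‖ * ‖v‖ := by
  by_cases hg : K.starProjection g = 0
  · obtain ⟨v, hvK, hv⟩ := K.ne_bot_iff.1 hK
    refine ⟨v, hvK, hv, ?_⟩
    rw [← K.inner_starProjection_left_of_mem hvK, hg]
    simp
  · have hgK := K.starProjection_apply_mem g
    refine ⟨K.starProjection g, hgK, hg, ?_⟩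
    rw [← K.inner_starProjection_left_of_mem hgK, real_inner_self_eq_norm_sq,
      abs_of_nonneg (by positivity), sq]

lemma le_one_of_mul_norm_le_norm_starProjection {γ : ℝ} {v : E} (hv : v ≠ 0)
    (hγ : γ * ‖v‖ ≤ ‖K.starProjection v‖) : γ ≤ 1 :=
  le_of_mul_le_mul_right (by simpa using hγ.trans (K.norm_starProjection_apply_le v))
    (norm_pos_iff.2 hv)

lemma mul_norm_le_norm_add_of_inner_starProjection_eq_zero {γ : ℝ} (hγ0 : 0 ≤ γ) (hγ1 : γ ≤ 1)
    {q v : E} (hv : γ * ‖v‖ ≤ ‖K.starProjection v‖)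
    (horth : ⟪K.starProjection q, K.starProjection v⟫ = 0) : γ * ‖q‖ ≤ ‖q + v‖ := by
  set P := K.starProjection
  set Q := Kᗮ.starProjection
  have hP : ‖P (q + v)‖ ^ 2 = ‖P q‖ ^ 2 + ‖P v‖ ^ 2 := by
    rw [map_add, norm_add_sq_real, horth]
    ring
  have hQ : (‖Q q‖ - ‖Q v‖) ^ 2 ≤ ‖Q (q + v)‖ ^ 2 := by
    rw [map_add, ← sq_abs]
    exact pow_le_pow_left₀ (abs_nonneg _) (by simpa using abs_norm_sub_norm_le (Q q) (-Q v)) 2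
  have hγv : γ ^ 2 * (‖P v‖ ^ 2 + ‖Q v‖ ^ 2) ≤ ‖P v‖ ^ 2 := by
    rw [← norm_sq_eq_add_norm_sq_starProjection, ← mul_pow]
    exact pow_le_pow_left₀ (by positivity) hv 2
  have hsq : (γ * ‖q‖) ^ 2 ≤ ‖q + v‖ ^ 2 := by
    rw [mul_pow, norm_sq_eq_add_norm_sq_starProjection q K,
      norm_sq_eq_add_norm_sq_starProjection (q + v) K, hP]
    linarith [sq_mul_add_sq_le_of_sq_mul_le (a := ‖P q‖) (b := ‖Q q‖) hγ0 hγ1 hγv]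
  exact (pow_le_pow_iff_left₀ (by positivity) (norm_nonneg _) two_ne_zero).1 hsq

theorem mul_norm_sub_le_of_forall_norm_starProjection_sub_le {V : Submodule ℝ E} (hV : V ≠ ⊥)
    {γ : ℝ} (hγ : 0 ≤ γ) (hinf : ∀ v ∈ V, γ * ‖v‖ ≤ ‖K.starProjection v‖) {y yd : E} (hyd : yd ∈ V)
    (hmin : ∀ v ∈ V, ‖K.starProjection (yd - y)‖ ≤ ‖K.starProjection (v - y)‖)
    {v : E} (hv : v ∈ V) : γ * ‖y - yd‖ ≤ ‖y - v‖ := by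
  obtain ⟨v₀, hv₀V, hv₀⟩ := V.ne_bot_iff.1 hV
  have hγ1 := K.le_one_of_mul_norm_le_norm_starProjection hv₀ (hinf v₀ hv₀V)
  have horth : ∀ w ∈ V.map (K.starProjection : E →ₗ[ℝ] E),
      ⟪K.starProjection y - K.starProjection yd, w⟫ = 0 := by
    refine inner_sub_eq_zero_of_forall_norm_sub_le (mem_map_of_mem hyd) ?_
    rintro _ ⟨w, hw, rfl⟩
    have h := hmin w hw
    rw [map_sub, map_sub, norm_sub_rev, norm_sub_rev (K.starProjection w)] at h
    simpa only [ContinuousLinearMap.coe_coe] using h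
  have hvd : yd - v ∈ V := V.sub_mem hyd hv
  have key := K.mul_norm_le_norm_add_of_inner_starProjection_eq_zero hγ hγ1 (hinf _ hvd)
    (q := y - yd) (by rw [map_sub]; exact horth _ (mem_map_of_mem hvd))
  rwa [sub_add_sub_cancel] at key

variable [CompleteSpace E]

theorem iSup_abs_div_norm_eq_norm_starProjection (hK : K ≠ ⊥) (φ : StrongDual ℝ E) :
    ⨆ v : {v : K // (v : E) ≠ 0}, |φ (v : E)| / ‖(v : E)‖
      = ‖K.starProjection ((InnerProductSpace.toDual ℝ E).symm φ)‖ := by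
  simp_rw [← InnerProductSpace.toDual_symm_apply (x := ((_ : K) : E)) (y := φ)]
  obtain ⟨v₀, hv₀K, hv₀, hv₀g⟩ := K.exists_abs_inner_eq_norm_starProjection_mul hK
    ((InnerProductSpace.toDual ℝ E).symm φ)
  have : Nonempty {v : K // (v : E) ≠ 0} := ⟨⟨⟨v₀, hv₀K⟩, hv₀⟩⟩
  refine ciSup_eq_of_forall_le_of_forall_lt_exists_gt (fun v => ?_)
    fun w hw => ⟨⟨⟨v₀, hv₀K⟩, hv₀⟩, ?_⟩
  · rw [div_le_iff₀ (norm_pos_iff.2 v.2)]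
    exact K.abs_inner_le_norm_starProjection_mul (v : K).2 _
  · rwa [hv₀g, mul_div_cancel_right₀ _ (norm_ne_zero_iff.2 hv₀)]

theorem iSup_sq_abs_div_sq_norm_eq_sq_norm_starProjection (hK : K ≠ ⊥) (φ : StrongDual ℝ E) :
    ⨆ v : {v : K // (v : E) ≠ 0}, |φ (v : E)| ^ 2 / ‖(v : E)‖ ^ 2
      = ‖K.starProjection ((InnerProductSpace.toDual ℝ E).symm φ)‖ ^ 2 := by
  simp_rw [← InnerProductSpace.toDual_symm_apply (x := ((_ : K) : E)) (y := φ)]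
  obtain ⟨v₀, hv₀K, hv₀, hv₀g⟩ := K.exists_abs_inner_eq_norm_starProjection_mul hK
    ((InnerProductSpace.toDual ℝ E).symm φ)
  have : Nonempty {v : K // (v : E) ≠ 0} := ⟨⟨⟨v₀, hv₀K⟩, hv₀⟩⟩
  refine ciSup_eq_of_forall_le_of_forall_lt_exists_gt (fun v => ?_)
    fun w hw => ⟨⟨⟨v₀, hv₀K⟩, hv₀⟩, ?_⟩
  · rw [div_le_iff₀ (pow_pos (norm_pos_iff.2 v.2) 2), ← mul_pow]
    exact pow_le_pow_left₀ (abs_nonneg _)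
      (K.abs_inner_le_norm_starProjection_mul (v : K).2 _) 2
  · rwa [hv₀g, mul_pow, mul_div_cancel_right₀ _ (pow_ne_zero 2 (norm_ne_zero_iff.2 hv₀))]

end Submodule

theorem minres_quasi_optimality_general
    {X Y : Type*}
    [NormedAddCommGroup X] [InnerProductSpace ℝ X]
    [NormedAddCommGroup Y] [InnerProductSpace ℝ Y] [CompleteSpace Y]
    (G : X ≃L[ℝ] StrongDual ℝ Y) (f : StrongDual ℝ Y) (u : X) (hu : G u = f)
    (Xd : Submodule ℝ X) (Yd : Submodule ℝ Y)
    (hYdclosed : IsClosed (Yd : Set Y))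
    (hXdbot : Xd ≠ ⊥) (hYdbot : Yd ≠ ⊥)
    (γd : ℝ)
    (hγdef : γd = ⨅ w : {w : Xd // (w : X) ≠ 0},
        (⨆ v : {v : Yd // (v : Y) ≠ 0},
          |G ((w : Xd) : X) ((v : Yd) : Y)| / ‖((v : Yd) : Y)‖) / ‖G ((w : Xd) : X)‖)
    (hγpos : 0 < γd)
    (ud : Xd)
    (hud : ∀ w : Xd,
      (1/2) * ⨆ v : {v : Yd // (v : Y) ≠ 0},
          |(G ((ud : Xd) : X) - f) ((v : Yd) : Y)| ^ 2 / ‖((v : Yd) : Y)‖ ^ 2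
      ≤ (1/2) * ⨆ v : {v : Yd // (v : Y) ≠ 0},
          |(G ((w : Xd) : X) - f) ((v : Yd) : Y)| ^ 2 / ‖((v : Yd) : Y)‖ ^ 2) :
    ‖G (u - (ud : X))‖ ≤ (1 / γd) * ⨅ w : Xd, ‖G (u - (w : X))‖ := by
  have : CompleteSpace Yd := hYdclosed.completeSpace_coe
  set T : X ≃ₗ[ℝ] Y := G.toLinearEquiv.trans (InnerProductSpace.toDual ℝ Y).symm.toLinearEquiv
  have hRT : ∀ x, (InnerProductSpace.toDual ℝ Y).symm (G x) = T x := fun _ => rfl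
  have hT : ∀ x, ‖G x‖ = ‖T x‖ := fun x => by rw [← hRT, LinearIsometryEquiv.norm_map]
  have hres : ∀ x, (InnerProductSpace.toDual ℝ Y).symm (G x - f) = T x - T u := fun x => by
    rw [← hu, ← map_sub, hRT, map_sub]
  simp only [Yd.iSup_abs_div_norm_eq_norm_starProjection hYdbot, hRT, hT] at hγdef
  simp only [Yd.iSup_sq_abs_div_sq_norm_eq_sq_norm_starProjection hYdbot, hres] at hud
  have hinf : ∀ v ∈ Xd.map (T : X →ₗ[ℝ] Y), γd * ‖v‖ ≤ ‖Yd.starProjection v‖ := by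
    rintro _ ⟨x, hx, rfl⟩
    rw [LinearEquiv.coe_coe]
    rcases eq_or_ne x 0 with rfl | hx0
    · simp
    exact mul_le_of_eq_iInf_div (fun _ => norm_nonneg _)
      (fun w => norm_pos_iff.2 (T.map_ne_zero_iff.2 w.2)) hγdef ⟨⟨x, hx⟩, hx0⟩
  have hmin : ∀ v ∈ Xd.map (T : X →ₗ[ℝ] Y),
      ‖Yd.starProjection (T ud - T u)‖ ≤ ‖Yd.starProjection (v - T u)‖ := by
    rintro _ ⟨w, hw, rfl⟩
    rw [LinearEquiv.coe_coe]
    have h := hud ⟨w, hw⟩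
    exact (pow_le_pow_iff_left₀ (norm_nonneg _) (norm_nonneg _) two_ne_zero).1 (by linarith)
  have hV : Xd.map (T : X →ₗ[ℝ] Y) ≠ ⊥ := by rwa [Ne, Submodule.map_eq_bot_iff]
  rw [one_div, inv_mul_eq_div, le_div_iff₀' hγpos, hT, map_sub]
  exact le_ciInf fun w => by
    rw [hT, map_sub]
    exact Yd.mul_norm_sub_le_of_forall_norm_starProjection_sub_le hV hγpos.le hinf
      (Submodule.mem_map_of_mem ud.2) hmin (Submodule.mem_map_of_mem w.2)

/-- Quasi-optimality of the minimal residual approximation with discretized dual norm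
(Theorem 3.3 form, stated as the bound `|||u − u^δ|||_X ≤ (1/γ^δ) inf_{w ∈ X^δ} |||u − w|||_X`). -/
theorem minres_quasi_optimality
    {X Y : Type*}
    [NormedAddCommGroup X] [InnerProductSpace ℝ X] [CompleteSpace X]
    [NormedAddCommGroup Y] [InnerProductSpace ℝ Y] [CompleteSpace Y]
    (G : X ≃L[ℝ] StrongDual ℝ Y) (f : StrongDual ℝ Y) (u : X) (hu : G u = f)
    (Xd : Submodule ℝ X) (Yd : Submodule ℝ Y)
    (hXdclosed : IsClosed (Xd : Set X)) (hYdclosed : IsClosed (Yd : Set Y))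
    (hXdbot : Xd ≠ ⊥) (hXdtop : Xd ≠ ⊤) (hYdbot : Yd ≠ ⊥) (hYdtop : Yd ≠ ⊤)
    (γd : ℝ)
    (hγdef : γd = ⨅ w : {w : Xd // (w : X) ≠ 0},
        (⨆ v : {v : Yd // (v : Y) ≠ 0},
          |G ((w : Xd) : X) ((v : Yd) : Y)| / ‖((v : Yd) : Y)‖) / ‖G ((w : Xd) : X)‖)
    (hγpos : 0 < γd)
    (ud : Xd)
    (hud : ∀ w : Xd,
      (1/2) * ⨆ v : {v : Yd // (v : Y) ≠ 0},
          |(G ((ud : Xd) : X) - f) ((v : Yd) : Y)| ^ 2 / ‖((v : Yd) : Y)‖ ^ 2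
      ≤ (1/2) * ⨆ v : {v : Yd // (v : Y) ≠ 0},
          |(G ((w : Xd) : X) - f) ((v : Yd) : Y)| ^ 2 / ‖((v : Yd) : Y)‖ ^ 2) :
    ‖G (u - (ud : X))‖ ≤ (1 / γd) * ⨅ w : Xd, ‖G (u - (w : X))‖ :=
  minres_quasi_optimality_general G f u hu Xd Yd hYdclosed hXdbot hYdbot γd hγdef hγpos ud hud
end

section
/- In the setting of discretized minimal residual approximation, suppose additionally that ⟨·,·⟩_{Y^δ} is an inner product on Y^δ whose norm satisfies m^δ ‖v‖²_{Y^δ} ≤ ‖v‖²_Y ≤ M^δ ‖v‖²_{Y^δ} for all v ∈ Y^δ, with 0 < m^δ ≤ M^δ < ∞. Let u^δ ∈ X^δ minimize (1/2) sup over nonzero v ∈ Y^δ of |(G w − f)(v)|²/‖v‖²_{Y^δ}. Then |||u − u^δ|||_X ≤ (√(M^δ)/(γ^δ √(m^δ))) · inf over w ∈ X^δ of |||u − w|||_X. -/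
/-!
Let `J ℓ ∈ Y^δ` be the `⟨·,·⟩_{Y^δ}`-representer of `ℓ|_{Y^δ}` (Lax–Milgram). The minimised
functional is `½ ‖J (G w - f)‖²_{Y^δ}`, so the discrete residual `J (G u^δ - f)` is
`⟨·,·⟩_{Y^δ}`-orthogonal to `J G X^δ`. For `d ∈ X^δ` and `ρ` a multiple of `G (u - u^δ)` this gives
`γ^δ ‖G d‖ ≤ sup_v |G d v| / ‖v‖_Y ≤ ‖J G d‖_{Y^δ} / √m^δ ≤ ‖J (G d + ρ)‖_{Y^δ} / √m^δ
  ≤ √(M^δ / m^δ) ‖G d + ρ‖`.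
So with `C = √(M^δ / m^δ) / γ^δ ≥ 1` we have `‖ℓ‖ ≤ C ‖ℓ + t ρ‖` for all `t`, where
`ℓ = G (u^δ - w)` and `ρ = G (u - u^δ)`. In a Hilbert space this forces `‖ρ‖ ≤ C ‖ℓ + ρ‖`
(a local form of Kato's `‖I - P‖ = ‖P‖` for idempotents), and `ℓ + ρ = G (u - w)`.
-/

open RealInnerProductSpace

section Kato

variable {E : Type*} [NormedAddCommGroup E] [InnerProductSpace ℝ E] {r k : E} {C : ℝ}

theorem sq_mul_sq_inner_le_of_forall_norm_le_mul_norm_add_smul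
    (h : ∀ t : ℝ, ‖r‖ ≤ C * ‖r + t • k‖) :
    C ^ 2 * ⟪r, k⟫ ^ 2 ≤ (C ^ 2 - 1) * (‖r‖ ^ 2 * ‖k‖ ^ 2) := by
  rcases eq_or_ne k 0 with rfl | hk
  · simp
  have hk2 : 0 < ‖k‖ ^ 2 := by positivity
  -- `t = -⟪r, k⟫ / ‖k‖²` minimises `‖r + t • k‖`
  have hmin : ‖k‖ ^ 2 * ‖r + (-⟪r, k⟫ / ‖k‖ ^ 2) • k‖ ^ 2 = ‖r‖ ^ 2 * ‖k‖ ^ 2 - ⟪r, k⟫ ^ 2 := by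
    rw [norm_add_sq_real, real_inner_smul_right, norm_smul, Real.norm_eq_abs, mul_pow, sq_abs]
    field_simp
    ring
  have hsq : ‖r‖ ^ 2 ≤ C ^ 2 * ‖r + (-⟪r, k⟫ / ‖k‖ ^ 2) • k‖ ^ 2 := by
    simpa [mul_pow] using pow_le_pow_left₀ (norm_nonneg r) (h _) 2
  nlinarith [mul_le_mul_of_nonneg_left hsq hk2.le]

theorem norm_le_mul_norm_add_of_forall_norm_le_mul_norm_add_smul (hC : 1 ≤ C)
    (h : ∀ t : ℝ, ‖r‖ ≤ C * ‖r + t • k‖) : ‖k‖ ≤ C * ‖r + k‖ := by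
  have hinner := sq_mul_sq_inner_le_of_forall_norm_le_mul_norm_add_smul h
  have hC2 : 0 ≤ C ^ 2 - 1 := by nlinarith
  -- AM-GM: `(2 C² ⟪r, k⟫)² ≤ 4 (C² ‖r‖²) ((C² - 1) ‖k‖²) ≤ (C² ‖r‖² + (C² - 1) ‖k‖²)²`
  have hamgm : (2 * C ^ 2 * ⟪r, k⟫) ^ 2 ≤ (C ^ 2 * ‖r‖ ^ 2 + (C ^ 2 - 1) * ‖k‖ ^ 2) ^ 2 := by
    nlinarith [sq_nonneg (C ^ 2 * ‖r‖ ^ 2 - (C ^ 2 - 1) * ‖k‖ ^ 2)]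
  have hsum := (abs_le_of_sq_le_sq' hamgm (by positivity)).1
  have hsq : ‖k‖ ^ 2 ≤ (C * ‖r + k‖) ^ 2 := by
    rw [mul_pow, norm_add_sq_real]
    linarith
  exact (pow_le_pow_iff_left₀ (norm_nonneg _) (by positivity) two_ne_zero).1 hsq

theorem StrongDual.norm_le_mul_norm_add_of_forall_norm_le_mul_norm_add_smul [CompleteSpace E]
    {ℓ ρ : StrongDual ℝ E} (hC : 1 ≤ C) (h : ∀ t : ℝ, ‖ℓ‖ ≤ C * ‖ℓ + t • ρ‖) :
    ‖ρ‖ ≤ C * ‖ℓ + ρ‖ := by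
  let e := (InnerProductSpace.toDual ℝ E).symm
  have he : ∀ t : ℝ, e ℓ + t • e ρ = e (ℓ + t • ρ) := fun t => by simp [e]
  have key := _root_.norm_le_mul_norm_add_of_forall_norm_le_mul_norm_add_smul (r := e ℓ)
    (k := e ρ) hC fun t => by simpa only [he, LinearIsometryEquiv.norm_map] using h t
  rwa [← map_add, LinearIsometryEquiv.norm_map, LinearIsometryEquiv.norm_map] at key

end Kato

section EquivalentInnerProduct

variable {V : Type*} [NormedAddCommGroup V] [InnerProductSpace ℝ V]
  {b : LinearMap.BilinForm ℝ V} {m M : ℝ}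

theorem LinearMap.BilinForm.apply_self_nonneg_of_sq_norm_le (hM : 0 < M)
    (hupp : ∀ v, ‖v‖ ^ 2 ≤ M * b v v) (v : V) : 0 ≤ b v v :=
  nonneg_of_mul_nonneg_right ((sq_nonneg _).trans (hupp v)) hM

theorem LinearMap.BilinForm.abs_apply_le_of_mul_le_sq_norm (hb : ∀ v w, b v w = b w v)
    (hm : 0 < m) (hlow : ∀ v, m * b v v ≤ ‖v‖ ^ 2) (hnn : ∀ v, 0 ≤ b v v) (v w : V) :
    |b v w| ≤ m⁻¹ * ‖v‖ * ‖w‖ := by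
  have hcs := b.apply_sq_le_of_symm hnn ⟨hb⟩ v w
  have hv := hlow v
  have hw := hlow w
  rw [← sq_le_sq₀ (abs_nonneg _) (by positivity), sq_abs]
  rw [mul_pow, mul_pow, ← mul_le_mul_iff_right₀ (by positivity : 0 < m ^ 2)]
  field_simp
  nlinarith [mul_le_mul hv hw (mul_nonneg hm.le (hnn w)) (sq_nonneg _)]

theorem LinearMap.BilinForm.exists_forall_apply_eq [CompleteSpace V]
    (hb : ∀ v w, b v w = b w v) (hm : 0 < m) (hM : 0 < M) (hlow : ∀ v, m * b v v ≤ ‖v‖ ^ 2)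
    (hupp : ∀ v, ‖v‖ ^ 2 ≤ M * b v v) (ℓ : StrongDual ℝ V) : ∃ j, ∀ v, b j v = ℓ v := by
  have hnn := b.apply_self_nonneg_of_sq_norm_le hM hupp
  let B : V →L[ℝ] V →L[ℝ] ℝ := b.mkContinuous₂ m⁻¹ fun v w => by
    simpa [Real.norm_eq_abs] using b.abs_apply_le_of_mul_le_sq_norm hb hm hlow hnn v w
  have hB : IsCoercive B := ⟨M⁻¹, inv_pos.2 hM, fun v => by
    rw [mul_assoc, ← sq, inv_mul_le_iff₀ hM]; exact hupp v⟩
  set E := hB.continuousLinearEquivOfBilin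
  refine ⟨E.symm ((InnerProductSpace.toDual ℝ V).symm ℓ), fun v => ?_⟩
  have := hB.continuousLinearEquivOfBilin_apply (E.symm ((InnerProductSpace.toDual ℝ V).symm ℓ)) v
  rwa [ContinuousLinearEquiv.apply_symm_apply, InnerProductSpace.toDual_symm_apply,
    eq_comm] at this

end EquivalentInnerProduct

theorem LinearMap.BilinForm.apply_eq_zero_of_forall_apply_self_le {V : Type*} [AddCommGroup V]
    [Module ℝ V] {b : LinearMap.BilinForm ℝ V} (hb : ∀ v w, b v w = b w v) {e c : V}
    (h : ∀ t : ℝ, b e e ≤ b (e + t • c) (e + t • c)) : b e c = 0 := by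
  have hquad : ∀ t : ℝ, 0 ≤ b c c * (t * t) + 2 * b e c * t + 0 := fun t => by
    have := h t
    simp only [map_add, map_smul, LinearMap.add_apply, LinearMap.smul_apply, smul_eq_mul,
      hb c e] at this
    linarith
  have := discrim_le_zero hquad
  rw [discrim] at this
  nlinarith [sq_nonneg (b e c)]

section DiscreteDualNorm

variable {Y : Type*} [NormedAddCommGroup Y] [NormedSpace ℝ Y] {Yd : Submodule ℝ Y}

noncomputable def restrictedDualNorm (Yd : Submodule ℝ Y) (ℓ : StrongDual ℝ Y) : ℝ :=
  ⨆ v : {v : Yd // (v : Y) ≠ 0}, |ℓ v| / ‖(v : Y)‖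

noncomputable def dualNormSq (b : LinearMap.BilinForm ℝ Yd) (ℓ : StrongDual ℝ Y) : ℝ :=
  ⨆ v : {v : Yd // (v : Y) ≠ 0}, |ℓ v| ^ 2 / b v v

theorem restrictedDualNorm_nonneg (ℓ : StrongDual ℝ Y) : 0 ≤ restrictedDualNorm Yd ℓ :=
  Real.iSup_nonneg fun _ => by positivity

theorem restrictedDualNorm_le_norm (ℓ : StrongDual ℝ Y) : restrictedDualNorm Yd ℓ ≤ ‖ℓ‖ :=
  Real.iSup_le (fun _ => div_le_of_le_mul₀ (norm_nonneg _) (norm_nonneg _) (ℓ.le_opNorm _))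
    (norm_nonneg _)

variable {b : LinearMap.BilinForm ℝ Yd} {m M : ℝ} {ℓ ρ : StrongDual ℝ Y} {j k : Yd}

theorem dualNormSq_eq_of_forall_apply_eq (hb : ∀ v w, b v w = b w v) (hnn : ∀ v, 0 ≤ b v v)
    (hj : ∀ v : Yd, b j v = ℓ v) : dualNormSq b ℓ = b j j := by
  have hle : ∀ v : {v : Yd // (v : Y) ≠ 0}, |ℓ v| ^ 2 / b v v ≤ b j j := fun v => by
    rw [sq_abs, ← hj]
    exact div_le_of_le_mul₀ (hnn v) (hnn j) (b.apply_sq_le_of_symm hnn ⟨hb⟩ j v)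
  refine le_antisymm (Real.iSup_le hle (hnn j)) ?_
  rcases eq_or_ne (j : Y) 0 with hj0 | hj0
  · rw [ZeroMemClass.coe_eq_zero.1 hj0, map_zero]
    exact Real.iSup_nonneg fun v => div_nonneg (sq_nonneg _) (hnn v)
  · refine le_ciSup_of_le ⟨b j j, Set.forall_mem_range.2 hle⟩ ⟨j, hj0⟩ ?_
    rw [sq_abs, ← hj, sq, mul_self_div_self]

theorem apply_eq_zero_of_forall_dualNormSq_le (hb : ∀ v w, b v w = b w v)
    (hnn : ∀ v, 0 ≤ b v v) (hj : ∀ v : Yd, b j v = ℓ v) (hk : ∀ v : Yd, b k v = ρ v)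
    (hmin : ∀ t : ℝ, dualNormSq b ℓ ≤ dualNormSq b (ℓ + t • ρ)) : b j k = 0 := by
  refine LinearMap.BilinForm.apply_eq_zero_of_forall_apply_self_le hb fun t => ?_
  have hrep : ∀ v : Yd, b (j + t • k) v = (ℓ + t • ρ) v := fun v => by simp [hj, hk]
  simpa only [dualNormSq_eq_of_forall_apply_eq hb hnn hj,
    dualNormSq_eq_of_forall_apply_eq hb hnn hrep] using hmin t

theorem apply_self_le_mul_sq_norm_of_forall_apply_eq (hM : 0 ≤ M)
    (hupp : ∀ v : Yd, ‖(v : Y)‖ ^ 2 ≤ M * b v v) (hj : ∀ v : Yd, b j v = ℓ v) :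
    b j j ≤ M * ‖ℓ‖ ^ 2 := by
  rcases le_or_gt (b j j) 0 with hj0 | hj0
  · exact hj0.trans (mul_nonneg hM (sq_nonneg _))
  have hℓj : b j j ≤ ‖ℓ‖ * ‖(j : Y)‖ := (hj j).trans_le ((le_abs_self _).trans (ℓ.le_opNorm j))
  refine le_of_mul_le_mul_right ?_ hj0
  calc b j j * b j j ≤ ‖ℓ‖ ^ 2 * ‖(j : Y)‖ ^ 2 := by nlinarith
    _ ≤ ‖ℓ‖ ^ 2 * (M * b j j) := by gcongr; exact hupp j
    _ = M * ‖ℓ‖ ^ 2 * b j j := by ring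

theorem restrictedDualNorm_le_sqrt_of_forall_apply_eq (hb : ∀ v w, b v w = b w v)
    (hnn : ∀ v, 0 ≤ b v v) (hm : 0 < m) (hlow : ∀ v : Yd, m * b v v ≤ ‖(v : Y)‖ ^ 2)
    (hj : ∀ v : Yd, b j v = ℓ v) : restrictedDualNorm Yd ℓ ≤ √(b j j / m) := by
  refine Real.iSup_le (fun v => ?_) (Real.sqrt_nonneg _)
  have hv : 0 < ‖((v : Yd) : Y)‖ := norm_pos_iff.2 v.2
  rw [Real.le_sqrt (by positivity) (div_nonneg (hnn j) hm.le), div_pow, sq_abs, ← hj,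
    div_le_div_iff₀ (by positivity) hm]
  nlinarith [b.apply_sq_le_of_symm hnn ⟨hb⟩ j v, mul_le_mul_of_nonneg_left (hlow v) (hnn j)]

theorem restrictedDualNorm_le_of_apply_eq_zero (hb : ∀ v w, b v w = b w v)
    (hnn : ∀ v, 0 ≤ b v v) (hm : 0 < m) (hM : 0 ≤ M)
    (hlow : ∀ v : Yd, m * b v v ≤ ‖(v : Y)‖ ^ 2) (hupp : ∀ v : Yd, ‖(v : Y)‖ ^ 2 ≤ M * b v v)
    (hj : ∀ v : Yd, b j v = ℓ v) (hk : ∀ v : Yd, b k v = ρ v) (hjk : b j k = 0) :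
    restrictedDualNorm Yd ℓ ≤ √(M / m) * ‖ℓ + ρ‖ := by
  have hpythagoras : b (j + k) (j + k) = b j j + b k k := by
    simp only [map_add, LinearMap.add_apply, hjk, hb k j]
    ring
  have hrep : ∀ v : Yd, b (j + k) v = (ℓ + ρ) v := fun v => by
    rw [map_add, LinearMap.add_apply, hj, hk]
    rfl
  calc restrictedDualNorm Yd ℓ
      ≤ √(b j j / m) := restrictedDualNorm_le_sqrt_of_forall_apply_eq hb hnn hm hlow hj
    _ ≤ √(M * ‖ℓ + ρ‖ ^ 2 / m) := by
      gcongr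
      linarith [hnn k, apply_self_le_mul_sq_norm_of_forall_apply_eq hM hupp hrep]
    _ = √(M / m) * ‖ℓ + ρ‖ := by
      rw [mul_div_right_comm, Real.sqrt_mul' _ (sq_nonneg _), Real.sqrt_sq (norm_nonneg _)]

end DiscreteDualNorm

section InfSup

variable {X Y : Type*} [NormedAddCommGroup X] [NormedSpace ℝ X] [NormedAddCommGroup Y]
  [NormedSpace ℝ Y] {G : X →L[ℝ] StrongDual ℝ Y} {Xd : Submodule ℝ X} {Yd : Submodule ℝ Y}

noncomputable def infSupConstant (G : X →L[ℝ] StrongDual ℝ Y) (Xd : Submodule ℝ X)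
    (Yd : Submodule ℝ Y) : ℝ :=
  ⨅ w : {w : Xd // (w : X) ≠ 0}, restrictedDualNorm Yd (G w) / ‖G w‖

theorem bddBelow_range_restrictedDualNorm_div_norm :
    BddBelow (Set.range fun w : {w : Xd // (w : X) ≠ 0} => restrictedDualNorm Yd (G w) / ‖G w‖) :=
  ⟨0, Set.forall_mem_range.2 fun _ => div_nonneg (restrictedDualNorm_nonneg _) (norm_nonneg _)⟩

theorem infSupConstant_le_one : infSupConstant G Xd Yd ≤ 1 := by
  rcases isEmpty_or_nonempty {w : Xd // (w : X) ≠ 0} with hX | ⟨⟨w⟩⟩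
  · rw [infSupConstant, Real.iInf_of_isEmpty]
    exact zero_le_one
  · exact (ciInf_le bddBelow_range_restrictedDualNorm_div_norm w).trans
      (div_le_one_of_le₀ (restrictedDualNorm_le_norm _) (norm_nonneg _))

theorem infSupConstant_mul_norm_le {w : X} (hw : w ∈ Xd) :
    infSupConstant G Xd Yd * ‖G w‖ ≤ restrictedDualNorm Yd (G w) := by
  rcases eq_or_ne (G w) 0 with hGw | hGw
  · rw [hGw, norm_zero, mul_zero]
    exact restrictedDualNorm_nonneg _
  have hw0 : w ≠ 0 := fun h => hGw (by rw [h, map_zero])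
  rw [← le_div_iff₀ (norm_pos_iff.2 hGw)]
  exact ciInf_le bddBelow_range_restrictedDualNorm_div_norm ⟨⟨w, hw⟩, hw0⟩

end InfSup

open NormedSpace

theorem minres_quasi_optimality_changed_norm_general
    {X Y : Type*}
    [NormedAddCommGroup X] [InnerProductSpace ℝ X]
    [NormedAddCommGroup Y] [InnerProductSpace ℝ Y] [CompleteSpace Y]
    (G : X ≃L[ℝ] StrongDual ℝ Y) (f : StrongDual ℝ Y) (u : X) (hu : G u = f)
    (Xd : Submodule ℝ X) (Yd : Submodule ℝ Y)
    (hYdclosed : IsClosed (Yd : Set Y))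
    -- the scalar product ⟨·,·⟩_{Y^δ} on Y^δ
    (b : Yd →ₗ[ℝ] Yd →ₗ[ℝ] ℝ)
    (hbsymm : ∀ v w : Yd, b v w = b w v)
    (md Md : ℝ) (hmd : 0 < md) (hmM : md ≤ Md)
    -- norm equivalence: m^δ ‖v‖²_{Y^δ} ≤ ‖v‖²_Y ≤ M^δ ‖v‖²_{Y^δ} on Y^δ
    (hlow : ∀ v : Yd, md * b v v ≤ ‖(v : Y)‖ ^ 2)
    (hupp : ∀ v : Yd, ‖(v : Y)‖ ^ 2 ≤ Md * b v v)
    (γd : ℝ)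
    (hγdef : γd = ⨅ w : {w : Xd // (w : X) ≠ 0},
        (⨆ v : {v : Yd // (v : Y) ≠ 0},
          |G ((w : Xd) : X) ((v : Yd) : Y)| / ‖((v : Yd) : Y)‖) / ‖G ((w : Xd) : X)‖)
    (hγpos : 0 < γd)
    (ud : Xd)
    (hud : ∀ w : Xd,
      (1/2) * ⨆ v : {v : Yd // (v : Y) ≠ 0},
          |(G ((ud : Xd) : X) - f) ((v : Yd) : Y)| ^ 2 / b (v : Yd) (v : Yd)
      ≤ (1/2) * ⨆ v : {v : Yd // (v : Y) ≠ 0},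
          |(G ((w : Xd) : X) - f) ((v : Yd) : Y)| ^ 2 / b (v : Yd) (v : Yd)) :
    ‖G (u - (ud : X))‖
      ≤ (Real.sqrt Md / (γd * Real.sqrt md)) * ⨅ w : Xd, ‖G (u - (w : X))‖ := by
  have := hYdclosed.completeSpace_coe
  have hMd : 0 < Md := hmd.trans_le hmM
  have hnn : ∀ v, 0 ≤ b v v := LinearMap.BilinForm.apply_self_nonneg_of_sq_norm_le hMd hupp
  have hrep (ℓ : StrongDual ℝ Y) : ∃ j : Yd, ∀ v : Yd, b j v = ℓ v :=
    LinearMap.BilinForm.exists_forall_apply_eq hbsymm hmd hMd hlow hupp (ℓ.comp Yd.subtypeL)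
  have hγ : γd = infSupConstant (G : X →L[ℝ] StrongDual ℝ Y) Xd Yd := hγdef
  obtain ⟨e, he⟩ := hrep (G ud - f)
  have horth (d : X) (hd : d ∈ Xd) (c : Yd) (hc : ∀ v : Yd, b c v = G d v) : b e c = 0 := by
    refine apply_eq_zero_of_forall_dualNormSq_le hbsymm hnn he hc fun t => ?_
    have hw := hud (ud + t • ⟨d, hd⟩)
    rw [show G (ud + t • ⟨d, hd⟩ : Xd) - f = G ud - f + t • G d by simp; abel] at hw
    exact le_of_mul_le_mul_left hw one_half_pos
  have hstable (d : X) (hd : d ∈ Xd) (t : ℝ) :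
      γd * ‖G d‖ ≤ √(Md / md) * ‖G d + t • G (u - ud)‖ := by
    obtain ⟨c, hc⟩ := hrep (G d)
    refine (hγ ▸ infSupConstant_mul_norm_le hd).trans
      (restrictedDualNorm_le_of_apply_eq_zero hbsymm hnn hmd hMd.le hlow hupp hc
        (k := -(t • e)) (fun v => ?_) (by simp [hbsymm c, horth d hd c hc]))
    simp [he, hu]
    ring
  have hC : 1 ≤ √(Md / md) / γd := (one_le_div hγpos).2 <| (hγ ▸ infSupConstant_le_one).trans
    (Real.one_le_sqrt.2 ((one_le_div hmd).2 hmM))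
  have hquasi (w : Xd) : ‖G (u - ud)‖ ≤ √(Md / md) / γd * ‖G (u - w)‖ := by
    have := StrongDual.norm_le_mul_norm_add_of_forall_norm_le_mul_norm_add_smul hC fun t => by
      rw [div_mul_eq_mul_div, le_div_iff₀' hγpos]
      exact hstable _ (Xd.sub_mem ud.2 w.2) t
    rwa [← map_add, sub_add_sub_cancel'] at this
  rw [show √Md / (γd * √md) = √(Md / md) / γd by rw [Real.sqrt_div' _ hmd.le]; ring,
    Real.mul_iInf_of_nonneg (by positivity)]
  exact le_ciInf hquasi

/-- Quasi-optimality when the norm on `Y^δ` is replaced by an equivalent inner-product norm: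
`|||u − u^δ|||_X ≤ (√M^δ/(γ^δ √m^δ)) inf_{w ∈ X^δ} |||u − w|||_X`. -/
theorem minres_quasi_optimality_changed_norm
    {X Y : Type*}
    [NormedAddCommGroup X] [InnerProductSpace ℝ X] [CompleteSpace X]
    [NormedAddCommGroup Y] [InnerProductSpace ℝ Y] [CompleteSpace Y]
    (G : X ≃L[ℝ] StrongDual ℝ Y) (f : StrongDual ℝ Y) (u : X) (hu : G u = f)
    (Xd : Submodule ℝ X) (Yd : Submodule ℝ Y)
    (hXdclosed : IsClosed (Xd : Set X)) (hYdclosed : IsClosed (Yd : Set Y))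
    (hXdbot : Xd ≠ ⊥) (hXdtop : Xd ≠ ⊤) (hYdbot : Yd ≠ ⊥) (hYdtop : Yd ≠ ⊤)
    -- the scalar product ⟨·,·⟩_{Y^δ} on Y^δ
    (b : Yd →ₗ[ℝ] Yd →ₗ[ℝ] ℝ)
    (hbsymm : ∀ v w : Yd, b v w = b w v)
    (hbpos : ∀ v : Yd, (v : Y) ≠ 0 → 0 < b v v)
    (md Md : ℝ) (hmd : 0 < md) (hmM : md ≤ Md)
    -- norm equivalence: m^δ ‖v‖²_{Y^δ} ≤ ‖v‖²_Y ≤ M^δ ‖v‖²_{Y^δ} on Y^δ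
    (hlow : ∀ v : Yd, md * b v v ≤ ‖(v : Y)‖ ^ 2)
    (hupp : ∀ v : Yd, ‖(v : Y)‖ ^ 2 ≤ Md * b v v)
    (γd : ℝ)
    (hγdef : γd = ⨅ w : {w : Xd // (w : X) ≠ 0},
        (⨆ v : {v : Yd // (v : Y) ≠ 0},
          |G ((w : Xd) : X) ((v : Yd) : Y)| / ‖((v : Yd) : Y)‖) / ‖G ((w : Xd) : X)‖)
    (hγpos : 0 < γd)
    (ud : Xd)
    (hud : ∀ w : Xd,
      (1/2) * ⨆ v : {v : Yd // (v : Y) ≠ 0},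
          |(G ((ud : Xd) : X) - f) ((v : Yd) : Y)| ^ 2 / b (v : Yd) (v : Yd)
      ≤ (1/2) * ⨆ v : {v : Yd // (v : Y) ≠ 0},
          |(G ((w : Xd) : X) - f) ((v : Yd) : Y)| ^ 2 / b (v : Yd) (v : Yd)) :
    ‖G (u - (ud : X))‖
      ≤ (Real.sqrt Md / (γd * Real.sqrt md)) * ⨅ w : Xd, ‖G (u - (w : X))‖ :=
  minres_quasi_optimality_changed_norm_general G f u hu Xd Yd hYdclosed b hbsymm md Md hmd hmM hlow
    hupp γd hγdef hγpos ud hud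
end

section
/- Let G ∈ Lis(X, Y') between Hilbert spaces. Equip Y with the norm ‖G' v‖_{X'} where G' : Y → X' is the adjoint. Then the corresponding dual norm on Y' satisfies sup over nonzero v ∈ Y of |f(v)|/‖G' v‖_{X'} = ‖G⁻¹ f‖_X for every f ∈ Y'. In particular, G : X → Y' and G' : Y → X' are isometries with respect to these norms. -/
/-!
Since `f v = (G' v) (G⁻¹ f)`, both claims say that `‖x‖_X` is the supremum of `|φ x| / ‖φ‖` over
the functionals `φ = G' v`. By Riesz representation on `Y`, every `φ ∈ X'` is of this form, so the
supremum runs over all of `X'`, where Hahn–Banach provides a norming functional for `x`.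
-/

open NormedSpace

theorem ContinuousLinearMap.flip_surjective_of_equiv
    {X Y : Type*} [NormedAddCommGroup X] [NormedSpace ℝ X]
    [NormedAddCommGroup Y] [InnerProductSpace ℝ Y] [CompleteSpace Y]
    (G : X ≃L[ℝ] StrongDual ℝ Y) :
    Function.Surjective (G : X →L[ℝ] StrongDual ℝ Y).flip := by
  intro g
  let T := InnerProductSpace.toDual ℝ Y
  -- the Riesz representative of `g ∘ G⁻¹ ∘ T`: then `(G w) v = ⟪T⁻¹ (G w), v⟫ = g w`
  refine ⟨T.symm ((g.comp (G.symm : StrongDual ℝ Y →L[ℝ] X)).comp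
    T.toContinuousLinearEquiv.toContinuousLinearMap), ?_⟩
  ext w
  rw [ContinuousLinearMap.flip_apply, ContinuousLinearEquiv.coe_coe,
    ← T.apply_symm_apply (G w), InnerProductSpace.toDual_apply_apply, real_inner_comm,
    InnerProductSpace.toDual_symm_apply]
  simp [T]

theorem iSup_abs_apply_div_norm_eq_norm_of_surjective
    {X Y : Type*} [NormedAddCommGroup X] [NormedSpace ℝ X] [AddCommGroup Y] [Module ℝ Y]
    (T : Y →ₗ[ℝ] StrongDual ℝ X) (hT : Function.Surjective T) (x : X) :
    (⨆ v : {v : Y // v ≠ 0}, |T v x| / ‖T v‖) = ‖x‖ := by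
  have h_le : ∀ v : {v : Y // v ≠ 0}, |T v x| / ‖T v‖ ≤ ‖x‖ := fun v =>
    div_le_of_le_mul₀ (norm_nonneg _) (norm_nonneg _) <| by
      rw [mul_comm, ← Real.norm_eq_abs]; exact (T v).le_opNorm x
  refine le_antisymm (Real.iSup_le h_le (norm_nonneg x)) ?_
  rcases eq_or_ne x 0 with rfl | hx
  · exact norm_zero.trans_le (Real.iSup_nonneg fun _ => by positivity)
  obtain ⟨g, hg_norm, hg_x⟩ := exists_dual_vector ℝ x (norm_ne_zero_iff.mpr hx)
  obtain ⟨v, rfl⟩ := hT g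
  have hv : v ≠ 0 := by
    rintro rfl
    simp at hg_norm
  calc ‖x‖ = |T v x| / ‖T v‖ := by simp [hg_x, hg_norm]
    _ ≤ _ := le_ciSup ⟨‖x‖, Set.forall_mem_range.mpr h_le⟩ (⟨v, hv⟩ : {v : Y // v ≠ 0})

theorem optimal_test_norm_dual_general
    {X Y : Type*}
    [NormedAddCommGroup X] [InnerProductSpace ℝ X]
    [NormedAddCommGroup Y] [InnerProductSpace ℝ Y] [CompleteSpace Y]
    (G : X ≃L[ℝ] StrongDual ℝ Y) :
    -- G' v := (w ↦ (G w)(v)) is the adjoint G' : Y → X'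
    let G' : Y →L[ℝ] StrongDual ℝ X := (G : X →L[ℝ] StrongDual ℝ Y).flip
    (∀ f : StrongDual ℝ Y,
        (⨆ v : {v : Y // v ≠ 0}, |f (v : Y)| / ‖G' (v : Y)‖) = ‖G.symm f‖) ∧
    (∀ x : X,
        (⨆ v : {v : Y // v ≠ 0}, |G x (v : Y)| / ‖G' (v : Y)‖) = ‖x‖) := by
  intro G'
  have h_isometry : ∀ x : X, (⨆ v : {v : Y // v ≠ 0}, |G x (v : Y)| / ‖G' (v : Y)‖) = ‖x‖ :=
    iSup_abs_apply_div_norm_eq_norm_of_surjective (G' : Y →ₗ[ℝ] StrongDual ℝ X)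
      (ContinuousLinearMap.flip_surjective_of_equiv G)
  refine ⟨fun f => ?_, h_isometry⟩
  simpa only [ContinuousLinearEquiv.apply_symm_apply] using h_isometry (G.symm f)

/-- With the optimal test norm `‖G'·‖_{X'}` on `Y`, the dual norm on `Y'` is
`‖G⁻¹·‖_X`; in particular `G` and `G'` are isometries w.r.t. these norms. -/
theorem optimal_test_norm_dual
    {X Y : Type*}
    [NormedAddCommGroup X] [InnerProductSpace ℝ X] [CompleteSpace X]
    [NormedAddCommGroup Y] [InnerProductSpace ℝ Y] [CompleteSpace Y]
    [Nontrivial Y]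
    (G : X ≃L[ℝ] StrongDual ℝ Y) :
    -- G' v := (w ↦ (G w)(v)) is the adjoint G' : Y → X'
    let G' : Y →L[ℝ] StrongDual ℝ X := (G : X →L[ℝ] StrongDual ℝ Y).flip
    (∀ f : StrongDual ℝ Y,
        (⨆ v : {v : Y // v ≠ 0}, |f (v : Y)| / ‖G' (v : Y)‖) = ‖G.symm f‖) ∧
    (∀ x : X,
        (⨆ v : {v : Y // v ≠ 0}, |G x (v : Y)| / ‖G' (v : Y)‖) = ‖x‖) :=
  optimal_test_norm_dual_general G
end

section
/- Let G ∈ Lis(X, Y') between Hilbert spaces, f ∈ Y', u = G⁻¹ f. Let X^δ ⊂ X, Y^δ ⊂ Y, X̂^δ ⊂ X be closed nonzero proper subspaces with inf-sup constants γ^δ := inf_{0≠w∈X^δ} [sup_{0≠v∈Y^δ} |(Gw)(v)|/‖G'v‖_{X'}]/‖w‖_X > 0 and μ^δ := inf_{0≠v∈Y^δ} [sup_{0≠w∈X̂^δ} |(G'v)(w)|/‖w‖_X]/‖G'v‖_{X'} > 0. Let u^δ ∈ X^δ minimize (1/2) sup over nonzero v ∈ Y^δ of |(G w − f)(v)|²/‖G'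 v‖²_{(X̂^δ)'}. Then ‖u − u^δ‖_X ≤ (1/(γ^δ μ^δ)) · inf over w ∈ X^δ of ‖u − w‖_X. -/
/-!
Let `E v ∈ X̂^δ` be the orthogonal projection of the Riesz representative of `G'v`, so that
`‖G'v‖_{(X̂^δ)'} = ‖E v‖ ≤ ‖G'v‖_{X'}`; by the definition of `μ^δ`, also `μ^δ ‖G'v‖_{X'} ≤ ‖E v‖`
on `Y^δ`. Hence the Gram form `⟪E ·, E ·⟫` is coercive on `Y^δ`, and Lax–Milgram provides for
every `x` a representative `L x ∈ E(Y^δ)` of `G x` on `Y^δ`. The MINRES functional is then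
`‖L (u - w)‖² / 2`, while `‖L x‖ ≤ ‖x‖ / μ^δ` and `γ^δ ‖y‖ ≤ ‖L y‖` on `X^δ`.

So `u^δ` is a least-squares approximation of `u` for the seminorm `‖L ·‖`, and Galerkin
orthogonality gives `γ^δ μ^δ ‖y‖ ≤ ‖y + t (u - u^δ)‖` for `y ∈ X^δ`: the sine of the angle between
`X^δ` and `u - u^δ` is at least `γ^δ μ^δ`. This lower bound on the sine is symmetric in the two
vectors (as in Kato's `‖I - P‖ = ‖P‖`), so `‖(u^δ - w) + (u - u^δ)‖ ≥ γ^δ μ^δ ‖u - u^δ‖`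
without the `1 +` of the usual Céa-type estimate.
-/

open InnerProductSpace

section InnerProductGeometry

variable {H : Type*} [NormedAddCommGroup H] [InnerProductSpace ℝ H]

theorem ciSup_abs_inner_div_norm_eq_norm {ι : Type*} (e : ι → H) {b : H}
    (hb : b = 0 ∨ b ∈ Set.range e) : ⨆ i, |⟪b, e i⟫_ℝ| / ‖e i‖ = ‖b‖ := by
  have hle : ∀ i, |⟪b, e i⟫_ℝ| / ‖e i‖ ≤ ‖b‖ := fun i =>
    div_le_of_le_mul₀ (norm_nonneg _) (norm_nonneg _) (abs_real_inner_le_norm b (e i))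
  rcases hb with rfl | ⟨i, rfl⟩
  · simp
  · have : Nonempty ι := ⟨i⟩
    refine le_antisymm (ciSup_le hle) (le_ciSup_of_le ⟨_, Set.forall_mem_range.2 hle⟩ i ?_)
    rw [real_inner_self_eq_norm_mul_norm, abs_mul_self, mul_self_div_self]

theorem ciSup_abs_inner_div_norm_sq_eq_norm_sq {ι : Type*} (e : ι → H) {b : H}
    (hb : b = 0 ∨ b ∈ Set.range e) : ⨆ i, (|⟪b, e i⟫_ℝ| / ‖e i‖) ^ 2 = ‖b‖ ^ 2 := by
  rcases isEmpty_or_nonempty ι with hι | hι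
  · obtain rfl : b = 0 := hb.resolve_right (by simp)
    simp
  · rw [← Real.iSup_pow (fun i => by positivity), ciSup_abs_inner_div_norm_eq_norm e hb]

theorem real_inner_sq_le_of_forall_mul_norm_le_norm_add_smul {p q : H} {c : ℝ} (hc : 0 ≤ c)
    (h : ∀ t : ℝ, c * ‖p‖ ≤ ‖p + t • q‖) :
    ⟪p, q⟫_ℝ ^ 2 ≤ (1 - c ^ 2) * ‖p‖ ^ 2 * ‖q‖ ^ 2 := by
  rcases eq_or_ne q 0 with rfl | hq
  · simp
  have hq2 : 0 < ‖q‖ ^ 2 := by positivity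
  have hmin : ‖p + -(⟪p, q⟫_ℝ / ‖q‖ ^ 2) • q‖ ^ 2 = ‖p‖ ^ 2 - ⟪p, q⟫_ℝ ^ 2 / ‖q‖ ^ 2 := by
    rw [norm_add_sq_real, real_inner_smul_right, norm_smul, Real.norm_eq_abs, mul_pow, sq_abs]
    field_simp
    ring
  have h2 := pow_le_pow_left₀ (by positivity) (h (-(⟪p, q⟫_ℝ / ‖q‖ ^ 2))) 2
  rw [hmin, mul_pow] at h2
  have h3 : ⟪p, q⟫_ℝ ^ 2 / ‖q‖ ^ 2 ≤ (1 - c ^ 2) * ‖p‖ ^ 2 := by linarith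
  exact (div_le_iff₀ hq2).1 h3

theorem mul_norm_le_norm_add_of_forall_mul_norm_le_norm_add_smul {p q : H} {c : ℝ}
    (hc₀ : 0 ≤ c) (hc₁ : c ≤ 1) (h : ∀ t : ℝ, c * ‖p‖ ≤ ‖p + t • q‖) : c * ‖q‖ ≤ ‖p + q‖ := by
  have hpq := real_inner_sq_le_of_forall_mul_norm_le_norm_add_smul hc₀ h
  have hc2 : 0 ≤ 1 - c ^ 2 := by nlinarith
  have hr : (2 * ⟪p, q⟫_ℝ) ^ 2 ≤ (‖p‖ ^ 2 + (1 - c ^ 2) * ‖q‖ ^ 2) ^ 2 := by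
    nlinarith [sq_nonneg (‖p‖ ^ 2 - (1 - c ^ 2) * ‖q‖ ^ 2)]
  have hs := (abs_le_of_sq_le_sq' hr (by positivity)).1
  have hsq : (c * ‖q‖) ^ 2 ≤ ‖p + q‖ ^ 2 := by
    rw [norm_add_sq_real, mul_pow]
    linarith
  exact (pow_le_pow_iff_left₀ (by positivity) (norm_nonneg _) two_ne_zero).1 hsq

end InnerProductGeometry

theorem mul_mul_norm_sub_le_norm_sub_of_isMinOn {X Z : Type*}
    [NormedAddCommGroup X] [InnerProductSpace ℝ X] [NormedAddCommGroup Z] [InnerProductSpace ℝ Z]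
    (L : X →ₗ[ℝ] Z) {M : Submodule ℝ X} (hM : M ≠ ⊥) {γ μ : ℝ} (hγ : 0 ≤ γ) (hμ : 0 ≤ μ)
    (hbound : ∀ x, μ * ‖L x‖ ≤ ‖x‖) (hstab : ∀ y ∈ M, γ * ‖y‖ ≤ ‖L y‖) {u m : X} (hm : m ∈ M)
    (hmin : IsMinOn (fun w => ‖L (u - w)‖) M m) {w : X} (hw : w ∈ M) :
    γ * μ * ‖u - m‖ ≤ ‖u - w‖ := by
  have horth : ∀ z ∈ M, ⟪L (u - m), L z⟫_ℝ = 0 := by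
    intro z hz
    have h := real_inner_sq_le_of_forall_mul_norm_le_norm_add_smul (p := L (u - m)) (q := L z)
      zero_le_one fun t => by
        rw [one_mul, ← map_smul, ← map_add, sub_add]
        exact isMinOn_iff.1 hmin (m - t • z) (M.sub_mem hm (M.smul_mem t hz))
    simpa using h
  have hangle : ∀ y ∈ M, ∀ t : ℝ, γ * μ * ‖y‖ ≤ ‖y + t • (u - m)‖ := by
    intro y hy t
    have hpyth : ‖L y‖ ≤ ‖L (y + t • (u - m))‖ := by
      have := norm_add_sq_eq_norm_sq_add_norm_sq_real (x := L y) (y := t • L (u - m))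
        (by rw [real_inner_smul_right, real_inner_comm, horth y hy, mul_zero])
      rw [map_add, map_smul]
      refine (mul_self_le_mul_self_iff (norm_nonneg _) (norm_nonneg _)).2 ?_
      rw [this]
      exact le_add_of_nonneg_right (mul_self_nonneg _)
    calc γ * μ * ‖y‖ = μ * (γ * ‖y‖) := by ring
      _ ≤ μ * ‖L (y + t • (u - m))‖ := by gcongr; exact (hstab y hy).trans hpyth
      _ ≤ ‖y + t • (u - m)‖ := hbound _
  have hc₁ : γ * μ ≤ 1 := by
    obtain ⟨y, hy, hy0⟩ := Submodule.exists_mem_ne_zero_of_ne_bot hM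
    have := hangle y hy 0
    rw [zero_smul, add_zero] at this
    exact le_of_mul_le_mul_right (by simpa using this) (norm_pos_iff.2 hy0)
  simpa using mul_norm_le_norm_add_of_forall_mul_norm_le_norm_add_smul (mul_nonneg hγ hμ) hc₁
    (hangle (m - w) (M.sub_mem hm hw))

theorem exists_real_inner_map_map_eq {V Z : Type*}
    [NormedAddCommGroup V] [InnerProductSpace ℝ V] [CompleteSpace V]
    [NormedAddCommGroup Z] [InnerProductSpace ℝ Z]
    (T : V →L[ℝ] Z) {C : ℝ} (hT : ∀ v, ‖v‖ ≤ C * ‖T v‖) :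
    ∃ D : StrongDual ℝ V →L[ℝ] V, ∀ ℓ v, ⟪T (D ℓ), T v⟫_ℝ = ℓ v := by
  set B : V →L[ℝ] V →L[ℝ] ℝ := (innerSL ℝ : Z →L[ℝ] Z →L[ℝ] ℝ).bilinearComp T T
  have hB : ∀ v w, B v w = ⟪T v, T w⟫_ℝ := fun _ _ => rfl
  have hcoercive : IsCoercive B := by
    refine ⟨(max C 1)⁻¹ ^ 2, by positivity, fun v => ?_⟩
    have hv : ‖v‖ ≤ max C 1 * ‖T v‖ :=
      (hT v).trans (mul_le_mul_of_nonneg_right (le_max_left _ _) (norm_nonneg _))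
    have hv' : (max C 1)⁻¹ * ‖v‖ ≤ ‖T v‖ := by
      rwa [inv_mul_le_iff₀ (by positivity)]
    rw [hB, real_inner_self_eq_norm_mul_norm]
    nlinarith [mul_le_mul hv' hv' (by positivity) (norm_nonneg _)]
  refine ⟨hcoercive.continuousLinearEquivOfBilin.symm.toContinuousLinearMap ∘L
    (toDual ℝ V).symm.toContinuousLinearEquiv.toContinuousLinearMap, fun ℓ v => ?_⟩
  rw [← hB, ← hcoercive.continuousLinearEquivOfBilin_apply]
  simp [toDual_symm_apply]

section DiscreteDualNorm

variable {X : Type*} [NormedAddCommGroup X] [InnerProductSpace ℝ X] [CompleteSpace X]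
  (K : Submodule ℝ X) [K.HasOrthogonalProjection] (φ : StrongDual ℝ X)

theorem real_inner_starProjection_toDual_symm_of_mem {w : X} (hw : w ∈ K) :
    ⟪K.starProjection ((toDual ℝ X).symm φ), w⟫_ℝ = φ w := by
  rw [K.inner_starProjection_left_eq_right, K.starProjection_eq_self_iff.2 hw, toDual_symm_apply]

theorem ciSup_abs_div_norm_eq_norm_starProjection_toDual_symm :
    ⨆ w : {w : K // (w : X) ≠ 0}, |φ w| / ‖(w : X)‖ =
      ‖K.starProjection ((toDual ℝ X).symm φ)‖ := by
  have hmem : K.starProjection ((toDual ℝ X).symm φ) ∈ K := K.starProjection_apply_mem _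
  rw [← ciSup_abs_inner_div_norm_eq_norm (fun w : {w : K // (w : X) ≠ 0} => (w : X)) ?_]
  · simp only [real_inner_starProjection_toDual_symm_of_mem K φ (Subtype.prop _)]
  · by_cases h0 : K.starProjection ((toDual ℝ X).symm φ) = 0
    · exact .inl h0
    · exact .inr ⟨⟨⟨_, hmem⟩, h0⟩, rfl⟩

theorem norm_starProjection_toDual_symm_le :
    ‖K.starProjection ((toDual ℝ X).symm φ)‖ ≤ ‖φ‖ :=
  (K.norm_starProjection_apply_le _).trans_eq (LinearIsometryEquiv.norm_map _ _)

end DiscreteDualNorm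

section InverseAdjoint

variable {X Y : Type*} [NormedAddCommGroup X] [NormedSpace ℝ X]
  [NormedAddCommGroup Y] [InnerProductSpace ℝ Y] (G : X ≃L[ℝ] StrongDual ℝ Y)

theorem norm_le_norm_symm_mul_norm_flip (v : Y) :
    ‖v‖ ≤ ‖(G.symm : StrongDual ℝ Y →L[ℝ] X)‖ * ‖(G : X →L[ℝ] StrongDual ℝ Y).flip v‖ := by
  have hsq : ‖v‖ ^ 2 = (G : X →L[ℝ] StrongDual ℝ Y).flip v (G.symm (innerSL ℝ v)) := by
    simp
  have hle : ‖v‖ ^ 2 ≤ ‖(G : X →L[ℝ] StrongDual ℝ Y).flip v‖ *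
      (‖(G.symm : StrongDual ℝ Y →L[ℝ] X)‖ * ‖v‖) := by
    rw [hsq]
    refine (Real.le_norm_self _).trans ((ContinuousLinearMap.le_opNorm _ _).trans ?_)
    gcongr
    exact ((G.symm : StrongDual ℝ Y →L[ℝ] X).le_opNorm _).trans_eq (by rw [innerSL_apply_norm])
  rcases (norm_nonneg v).eq_or_lt with h | h
  · rw [← h]; positivity
  · nlinarith

theorem norm_flip_pos {v : Y} (hv : v ≠ 0) : 0 < ‖(G : X →L[ℝ] StrongDual ℝ Y).flip v‖ :=
  pos_of_mul_pos_right ((norm_pos_iff.2 hv).trans_le (norm_le_norm_symm_mul_norm_flip G v))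
    (ContinuousLinearMap.opNorm_nonneg _)

theorem norm_le_div_mul_of_mul_norm_flip_le {μ a : ℝ} (hμ : 0 < μ) {v : Y}
    (h : μ * ‖(G : X →L[ℝ] StrongDual ℝ Y).flip v‖ ≤ a) :
    ‖v‖ ≤ ‖(G.symm : StrongDual ℝ Y →L[ℝ] X)‖ / μ * a :=
  calc ‖v‖ ≤ ‖(G.symm : StrongDual ℝ Y →L[ℝ] X)‖ * ‖(G : X →L[ℝ] StrongDual ℝ Y).flip v‖ :=
        norm_le_norm_symm_mul_norm_flip G v
    _ ≤ ‖(G.symm : StrongDual ℝ Y →L[ℝ] X)‖ * (a / μ) := by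
        gcongr; exact (le_div_iff₀' hμ).2 h
    _ = ‖(G.symm : StrongDual ℝ Y →L[ℝ] X)‖ / μ * a := by ring

end InverseAdjoint

theorem mul_le_of_eq_ciInf {ι : Type*} {F N : ι → ℝ} {c : ℝ} (hc : c = ⨅ i, F i / N i)
    (hF : ∀ i, 0 ≤ F i) (hN : ∀ i, 0 < N i) (i : ι) : c * N i ≤ F i := by
  have hbdd : BddBelow (Set.range fun j => F j / N j) :=
    ⟨0, by rintro _ ⟨j, rfl⟩; exact div_nonneg (hF j) (hN j).le⟩
  exact (le_div_iff₀ (hN i)).1 (hc ▸ ciInf_le hbdd i)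

section ResidualRepresenter

variable {X Y Z : Type*} [NormedAddCommGroup X] [NormedSpace ℝ X]
  [NormedAddCommGroup Y] [NormedSpace ℝ Y] [NormedAddCommGroup Z] [InnerProductSpace ℝ Z]
  {Yd : Submodule ℝ Y} {T : Yd →L[ℝ] Z} {D : StrongDual ℝ Yd →L[ℝ] Yd}

theorem ciSup_abs_div_norm_sq_eq_norm_map_sq (hD : ∀ ℓ v, ⟪T (D ℓ), T v⟫_ℝ = ℓ v)
    (ℓ : StrongDual ℝ Yd) :
    ⨆ v : {v : Yd // (v : Y) ≠ 0}, (|ℓ v| / ‖T v‖) ^ 2 = ‖T (D ℓ)‖ ^ 2 := by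
  simp only [← hD ℓ]
  refine ciSup_abs_inner_div_norm_sq_eq_norm_sq (fun v : {v : Yd // (v : Y) ≠ 0} => T v) ?_
  by_cases h : (D ℓ : Y) = 0
  · exact .inl (by rw [Submodule.coe_eq_zero.1 h, map_zero])
  · exact .inr ⟨⟨D ℓ, h⟩, rfl⟩

theorem mul_norm_map_le_norm (hD : ∀ ℓ v, ⟪T (D ℓ), T v⟫_ℝ = ℓ v)
    {G : X →L[ℝ] StrongDual ℝ Y} {μ : ℝ} (hμ : 0 < μ) (hT : ∀ v : Yd, μ * ‖G.flip v‖ ≤ ‖T v‖)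
    (x : X) : μ * ‖T (D ((G x).comp Yd.subtypeL))‖ ≤ ‖x‖ := by
  set r := T (D ((G x).comp Yd.subtypeL))
  have hsq : ‖r‖ * ‖r‖ ≤ ‖x‖ / μ * ‖r‖ := by
    rw [← real_inner_self_eq_norm_mul_norm, hD]
    calc (G x).comp Yd.subtypeL (D ((G x).comp Yd.subtypeL))
        ≤ ‖G.flip (D ((G x).comp Yd.subtypeL))‖ * ‖x‖ :=
          (Real.le_norm_self _).trans ((G.flip _).le_opNorm x)
      _ ≤ ‖r‖ / μ * ‖x‖ := by gcongr; exact (le_div_iff₀' hμ).2 (hT _)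
      _ = ‖x‖ / μ * ‖r‖ := by ring
  rw [← le_div_iff₀' hμ]
  rcases (norm_nonneg r).eq_or_lt with h | h
  · rw [← h]; positivity
  · exact le_of_mul_le_mul_right hsq h

theorem ciSup_abs_div_norm_flip_le_norm_map (hD : ∀ ℓ v, ⟪T (D ℓ), T v⟫_ℝ = ℓ v)
    {G : X →L[ℝ] StrongDual ℝ Y} (hT : ∀ v : Yd, ‖T v‖ ≤ ‖G.flip v‖) (x : X) :
    ⨆ v : {v : Yd // (v : Y) ≠ 0}, |G x v| / ‖G.flip v‖ ≤ ‖T (D ((G x).comp Yd.subtypeL))‖ := by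
  refine Real.iSup_le (fun v => div_le_of_le_mul₀ (norm_nonneg _) (norm_nonneg _) ?_)
    (norm_nonneg _)
  calc |G x v| = |⟪T (D ((G x).comp Yd.subtypeL)), T v⟫_ℝ| := by rw [hD]; rfl
    _ ≤ ‖T (D ((G x).comp Yd.subtypeL))‖ * ‖T v‖ := abs_real_inner_le_norm _ _
    _ ≤ ‖T (D ((G x).comp Yd.subtypeL))‖ * ‖G.flip v‖ := by gcongr; exact hT _

end ResidualRepresenter

theorem minres_optimal_test_norm_quasi_optimality_general
    {X Y : Type*}
    [NormedAddCommGroup X] [InnerProductSpace ℝ X] [CompleteSpace X]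
    [NormedAddCommGroup Y] [InnerProductSpace ℝ Y] [CompleteSpace Y]
    (G : X ≃L[ℝ] StrongDual ℝ Y) (f : StrongDual ℝ Y) (u : X) (hu : G u = f)
    (Xd : Submodule ℝ X) (Yd : Submodule ℝ Y) (Xhat : Submodule ℝ X)
    (hYdclosed : IsClosed (Yd : Set Y))
    (hXhatclosed : IsClosed (Xhat : Set X))
    (hXdbot : Xd ≠ ⊥)
    (γd μd : ℝ)
    (hγdef : γd = ⨅ w : {w : Xd // (w : X) ≠ 0},
        (⨆ v : {v : Yd // (v : Y) ≠ 0},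
          |G ((w : Xd) : X) ((v : Yd) : Y)|
            / ‖((G : X →L[ℝ] StrongDual ℝ Y).flip ((v : Yd) : Y))‖) / ‖((w : Xd) : X)‖)
    (hγpos : 0 < γd)
    (hμdef : μd = ⨅ v : {v : Yd // (v : Y) ≠ 0},
        (⨆ w : {w : Xhat // (w : X) ≠ 0},
          |G ((w : Xhat) : X) ((v : Yd) : Y)| / ‖((w : Xhat) : X)‖)
        / ‖((G : X →L[ℝ] StrongDual ℝ Y).flip ((v : Yd) : Y))‖)
    (hμpos : 0 < μd)
    (ud : Xd)
    (hud : ∀ w : Xd,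
      (1/2) * ⨆ v : {v : Yd // (v : Y) ≠ 0},
          |(G ((ud : Xd) : X) - f) ((v : Yd) : Y)| ^ 2
            / (⨆ w' : {w' : Xhat // (w' : X) ≠ 0},
                |G ((w' : Xhat) : X) ((v : Yd) : Y)| / ‖((w' : Xhat) : X)‖) ^ 2
      ≤ (1/2) * ⨆ v : {v : Yd // (v : Y) ≠ 0},
          |(G ((w : Xd) : X) - f) ((v : Yd) : Y)| ^ 2
            / (⨆ w' : {w' : Xhat // (w' : X) ≠ 0},
                |G ((w' : Xhat) : X) ((v : Yd) : Y)| / ‖((w' : Xhat) : X)‖) ^ 2) :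
    ‖u - (ud : X)‖ ≤ (1 / (γd * μd)) * ⨅ w : Xd, ‖u - (w : X)‖ := by
  have : CompleteSpace Yd := hYdclosed.completeSpace_coe
  have : CompleteSpace Xhat := hXhatclosed.completeSpace_coe
  set G' := (G : X →L[ℝ] StrongDual ℝ Y).flip
  set E : Y →L[ℝ] X := Xhat.starProjection ∘L
    (toDual ℝ X).symm.toContinuousLinearEquiv.toContinuousLinearMap ∘L G'
  have hdual (v : Y) : ⨆ w : {w : Xhat // (w : X) ≠ 0}, |G w v| / ‖(w : X)‖ = ‖E v‖ :=
    ciSup_abs_div_norm_eq_norm_starProjection_toDual_symm Xhat (G' v)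
  have hμE (v : Yd) : μd * ‖G' v‖ ≤ ‖E v‖ := by
    rcases eq_or_ne (v : Y) 0 with hv | hv
    · simp [hv]
    · simpa only [hdual] using mul_le_of_eq_ciInf hμdef
        (fun _ => Real.iSup_nonneg fun _ => by positivity) (fun v => norm_flip_pos G v.2) ⟨v, hv⟩
  obtain ⟨D, hD⟩ := exists_real_inner_map_map_eq (E ∘L Yd.subtypeL) fun v =>
    norm_le_div_mul_of_mul_norm_flip_le G hμpos (hμE v)
  set L : X →L[ℝ] X := E ∘L Yd.subtypeL ∘L D ∘L ContinuousLinearMap.precomp ℝ Yd.subtypeL ∘L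
    (G : X →L[ℝ] StrongDual ℝ Y)
  have hLge (y : X) (hy : y ∈ Xd) : γd * ‖y‖ ≤ ‖L y‖ := by
    rcases eq_or_ne y 0 with rfl | hy0
    · simp
    exact (mul_le_of_eq_ciInf hγdef (fun _ => Real.iSup_nonneg fun _ => by positivity)
      (fun w => norm_pos_iff.2 w.2) ⟨⟨y, hy⟩, hy0⟩).trans
      (ciSup_abs_div_norm_flip_le_norm_map hD
        (fun v => norm_starProjection_toDual_symm_le Xhat (G' v)) y)
  have hres (w : X) : ⨆ v : {v : Yd // (v : Y) ≠ 0}, |(G w - f) v| ^ 2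
      / (⨆ w' : {w' : Xhat // (w' : X) ≠ 0}, |G w' v| / ‖(w' : X)‖) ^ 2 = ‖L (u - w)‖ ^ 2 := by
    refine (iSup_congr fun v => ?_).trans (ciSup_abs_div_norm_sq_eq_norm_map_sq hD _)
    rw [hdual, div_pow, ← hu, ← abs_neg, ← neg_apply, neg_sub, ← map_sub]
    rfl
  have hmin : IsMinOn (fun w => ‖L (u - w)‖) Xd ud := isMinOn_iff.2 fun w hw => by
    have h := hud ⟨w, hw⟩
    rw [hres, hres] at h
    exact (pow_le_pow_iff_left₀ (norm_nonneg _) (norm_nonneg _) two_ne_zero).1 (by linarith)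
  rw [one_div, ← div_eq_inv_mul, le_div_iff₀' (mul_pos hγpos hμpos)]
  exact le_ciInf fun w => mul_mul_norm_sub_le_norm_sub_of_isMinOn (L : X →ₗ[ℝ] X) hXdbot
    hγpos.le hμpos.le (mul_norm_map_le_norm hD hμpos hμE) hLge ud.2 hmin w.2

/-- Quasi-optimality of the practical MINRES method with the optimal test norm and a
discretized dual norm: `‖u − u^δ‖_X ≤ (1/(γ^δ μ^δ)) inf_{w ∈ X^δ} ‖u − w‖_X`. -/
theorem minres_optimal_test_norm_quasi_optimality
    {X Y : Type*}
    [NormedAddCommGroup X] [InnerProductSpace ℝ X] [CompleteSpace X]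
    [NormedAddCommGroup Y] [InnerProductSpace ℝ Y] [CompleteSpace Y]
    (G : X ≃L[ℝ] StrongDual ℝ Y) (f : StrongDual ℝ Y) (u : X) (hu : G u = f)
    (Xd : Submodule ℝ X) (Yd : Submodule ℝ Y) (Xhat : Submodule ℝ X)
    (hXdclosed : IsClosed (Xd : Set X)) (hYdclosed : IsClosed (Yd : Set Y))
    (hXhatclosed : IsClosed (Xhat : Set X))
    (hXdbot : Xd ≠ ⊥) (hXdtop : Xd ≠ ⊤) (hYdbot : Yd ≠ ⊥) (hYdtop : Yd ≠ ⊤)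
    (hXhatbot : Xhat ≠ ⊥) (hXhattop : Xhat ≠ ⊤)
    (γd μd : ℝ)
    (hγdef : γd = ⨅ w : {w : Xd // (w : X) ≠ 0},
        (⨆ v : {v : Yd // (v : Y) ≠ 0},
          |G ((w : Xd) : X) ((v : Yd) : Y)|
            / ‖((G : X →L[ℝ] StrongDual ℝ Y).flip ((v : Yd) : Y))‖) / ‖((w : Xd) : X)‖)
    (hγpos : 0 < γd)
    (hμdef : μd = ⨅ v : {v : Yd // (v : Y) ≠ 0},
        (⨆ w : {w : Xhat // (w : X) ≠ 0},
          |G ((w : Xhat) : X) ((v : Yd) : Y)| / ‖((w : Xhat) : X)‖)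
        / ‖((G : X →L[ℝ] StrongDual ℝ Y).flip ((v : Yd) : Y))‖)
    (hμpos : 0 < μd)
    (ud : Xd)
    (hud : ∀ w : Xd,
      (1/2) * ⨆ v : {v : Yd // (v : Y) ≠ 0},
          |(G ((ud : Xd) : X) - f) ((v : Yd) : Y)| ^ 2
            / (⨆ w' : {w' : Xhat // (w' : X) ≠ 0},
                |G ((w' : Xhat) : X) ((v : Yd) : Y)| / ‖((w' : Xhat) : X)‖) ^ 2
      ≤ (1/2) * ⨆ v : {v : Yd // (v : Y) ≠ 0},
          |(G ((w : Xd) : X) - f) ((v : Yd) : Y)| ^ 2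
            / (⨆ w' : {w' : Xhat // (w' : X) ≠ 0},
                |G ((w' : Xhat) : X) ((v : Yd) : Y)| / ‖((w' : Xhat) : X)‖) ^ 2) :
    ‖u - (ud : X)‖ ≤ (1 / (γd * μd)) * ⨅ w : Xd, ‖u - (w : X)‖ :=
  minres_optimal_test_norm_quasi_optimality_general G f u hu Xd Yd Xhat hYdclosed hXhatclosed hXdbot
    γd μd hγdef hγpos hμdef hμpos ud hud
end

section
/- Let X^δ ⊂ X and Y^δ ⊂ Y be finite-dimensional subspaces, ⟨·,·⟩_{Y^δ} an inner product on Y^δ, G ∈ L(X, Y'), f ∈ Y'. Then u^δ := argmin over w ∈ X^δ of (1/2) sup over nonzero v ∈ Y^δ of |(G w − f)(v)|²/‖v‖²_{Y^δ} exists, and (λ^δ, u^δ) solves the saddle point problem ⟨λ^δ, μ⟩_{Y^δ} + (G u^δ)(μ) + (G w)(λ^δ) = f(μ) for all (μ, w) ∈ Y^δ × X^δ, where λ^δ is the Riesz lift in (Y^δ, ⟨·,·⟩_{Y^δ}) of the restriction of f − G u^δ to Y^δ; conversely the second component of any solution of the saddle point problem is such a minimizer, provided the discrete inf-sup constant γ^δ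 is positive. -/
/-!
Let `r` be the Riesz map of `(Y^δ, b)` and `T w := r (G w|_{Y^δ})`. By Cauchy–Schwarz the supremum
at `w` is `b λ_w λ_w` for the Riesz lift `λ_w = r f - T w` of `(f - G w)|_{Y^δ}`, so the problem is
least squares for `r f` over `range T`. Splitting `r f` along `range T` and its `b`-orthogonal
complement gives `u` with `λ_u ⊥ range T`; this orthogonality is the second saddle-point equation
`(G w)(λ_u) = 0`, and by Pythagoras any such `u` satisfies `b λ_u λ_u ≤ b λ_w λ_w` for all `w`.
-/

namespace LinearMap.BilinForm

variable {V W : Type*} [AddCommGroup V] [Module ℝ V] [AddCommGroup W] [Module ℝ W]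
  {B : LinearMap.BilinForm ℝ V}

theorem IsPosSemidef.apply_sq_le_mul (hB : B.IsPosSemidef) (x y : V) :
    B x y ^ 2 ≤ B x x * B y y := by
  have hquad : ∀ t : ℝ, 0 ≤ B y y * (t * t) + 2 * B x y * t + B x x := fun t => by
    have := hB.isNonneg.nonneg (x + t • y)
    simp only [map_add, map_smul, LinearMap.add_apply, LinearMap.smul_apply, smul_eq_mul,
      hB.isSymm.eq y x] at this
    linarith
  have := discrim_le_zero hquad
  rw [discrim] at this
  nlinarith

theorem IsPosSemidef.apply_self_le_apply_add_self (hB : B.IsPosSemidef) {x d : V}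
    (h : B d x = 0) : B x x ≤ B (x + d) (x + d) := by
  have hexpand : B (x + d) (x + d) = B x x + 2 * B d x + B d d := by
    simp only [map_add, LinearMap.add_apply, hB.isSymm.eq x d]
    ring
  linarith [hB.isNonneg.nonneg d]

theorem isPosSemidef_of_pos (hB : B.IsSymm) (hpos : ∀ v, v ≠ 0 → 0 < B v v) :
    B.IsPosSemidef := by
  refine ⟨hB, ⟨fun v => ?_⟩⟩
  rcases eq_or_ne v 0 with rfl | hv
  · simp
  · exact (hpos v hv).le

theorem nondegenerate_of_pos (hpos : ∀ v, v ≠ 0 → 0 < B v v) : B.Nondegenerate :=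
  ⟨fun v hv => by_contra fun h => (hpos v h).ne' (hv v),
    fun v hv => by_contra fun h => (hpos v h).ne' (hv v)⟩

theorem iSup_sq_div_apply_self (hB : B.IsSymm) (hpos : ∀ v, v ≠ 0 → 0 < B v v) (l : V) :
    ⨆ v : {v : V // v ≠ 0}, B l v ^ 2 / B v v = B l l := by
  rcases eq_or_ne l 0 with rfl | hl
  · simp
  have hbound : ∀ v : {v : V // v ≠ 0}, B l v ^ 2 / B v v ≤ B l l := fun v => by
    rw [div_le_iff₀ (hpos v v.2)]
    exact (isPosSemidef_of_pos hB hpos).apply_sq_le_mul l v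
  refine le_antisymm (Real.iSup_le hbound (hpos l hl).le) ?_
  refine le_ciSup_of_le ⟨B l l, Set.forall_mem_range.2 hbound⟩ ⟨l, hl⟩ ?_
  rw [sq, mul_div_assoc, div_self (hpos l hl).ne', mul_one]

theorem exists_sub_mem_orthogonal [FiniteDimensional ℝ V] (hB : B.IsSymm)
    (hpos : ∀ v, v ≠ 0 → 0 < B v v) (K : Submodule ℝ V) (x : V) :
    ∃ k ∈ K, x - k ∈ B.orthogonal K := by
  have hK : (B.restrict K).Nondegenerate :=
    nondegenerate_of_pos fun v hv => hpos v (by simpa using hv)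
  have hx : x ∈ K ⊔ B.orthogonal K := by
    rw [(isCompl_orthogonal_of_restrict_nondegenerate hB.isRefl hK).sup_eq_top]
    trivial
  obtain ⟨k, hk, q, hq, rfl⟩ := Submodule.mem_sup.1 hx
  exact ⟨k, hk, by simpa using hq⟩

theorem exists_saddle_point [FiniteDimensional ℝ V] (hB : B.IsSymm)
    (hpos : ∀ v, v ≠ 0 → 0 < B v v) (A : W →ₗ[ℝ] Module.Dual ℝ V) (φ : Module.Dual ℝ V) :
    ∃ u lam, (∀ μ, B lam μ = φ μ - A u μ) ∧ ∀ w, A w lam = 0 := by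
  have hnd := nondegenerate_of_pos hpos
  let r := (B.toDual hnd).symm
  obtain ⟨k, hk, horth⟩ :=
    exists_sub_mem_orthogonal hB hpos (LinearMap.range (r.toLinearMap ∘ₗ A)) (r φ)
  obtain ⟨u, rfl⟩ := LinearMap.mem_range.1 hk
  refine ⟨u, r φ - r (A u), fun μ => by simp [r], fun w => ?_⟩
  rw [← apply_toDual_symm_apply (hB := hnd) (A w)]
  exact mem_orthogonal_iff.1 horth _ (LinearMap.mem_range_self _ w)

theorem IsPosSemidef.apply_self_le_of_saddle_point (hB : B.IsPosSemidef)
    {A : W →ₗ[ℝ] Module.Dual ℝ V} {φ : Module.Dual ℝ V} {u w : W} {lam l : V}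
    (hlam : ∀ μ, B lam μ = φ μ - A u μ) (hA : ∀ w, A w lam = 0)
    (hl : ∀ μ, B l μ = φ μ - A w μ) : B lam lam ≤ B l l := by
  have horth : B (l - lam) lam = 0 := by
    rw [map_sub, LinearMap.sub_apply, hl, hlam, ← hA (u - w), map_sub, LinearMap.sub_apply]
    ring
  simpa using hB.apply_self_le_apply_add_self horth

end LinearMap.BilinForm

section SaddlePoint

open LinearMap.BilinForm

variable {X Y : Type*} [NormedAddCommGroup X] [NormedSpace ℝ X]
  [NormedAddCommGroup Y] [NormedSpace ℝ Y] {Xd : Submodule ℝ X} {Yd : Submodule ℝ Y}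
  {b : LinearMap.BilinForm ℝ Yd}

variable (Xd Yd) in
def restrictDual (G : X →L[ℝ] StrongDual ℝ Y) : Xd →ₗ[ℝ] Module.Dual ℝ Yd :=
  (ContinuousLinearMap.coeLM ℝ ∘ₗ G.toLinearMap).compl₁₂ Xd.subtype Yd.subtype

@[simp]
theorem restrictDual_apply (G : X →L[ℝ] StrongDual ℝ Y) (w : Xd) (μ : Yd) :
    restrictDual Xd Yd G w μ = G w μ :=
  rfl

theorem iSup_sq_residual_div_eq (hb : b.IsSymm) (hpos : ∀ v, v ≠ 0 → 0 < b v v)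
    {g f : StrongDual ℝ Y} {l : Yd} (hl : ∀ μ : Yd, b l μ = f μ - g μ) :
    ⨆ v : {v : Yd // (v : Y) ≠ 0}, |(g - f) (v : Y)| ^ 2 / b v v = b l l := by
  have hterm : ∀ v : Yd, |(g - f) (v : Y)| ^ 2 = b l v ^ 2 := fun v => by
    rw [hl, _root_.sub_apply, abs_sub_comm, sq_abs]
  simp only [hterm]
  exact (Equiv.subtypeEquivRight fun v => ZeroMemClass.coe_eq_zero.not).iSup_comp.trans
    (iSup_sq_div_apply_self hb hpos l)

theorem saddle_point_iff (G : X →L[ℝ] StrongDual ℝ Y) (f : StrongDual ℝ Y) (lam : Yd) (u : Xd) :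
    (∀ (μ : Yd) (w : Xd), b lam μ + G u μ + G w lam = f μ) ↔
      (∀ μ : Yd, b lam μ = f μ - G u μ) ∧ ∀ w : Xd, G w lam = 0 := by
  refine ⟨fun h => ⟨fun μ => ?_, fun w => by simpa using h 0 w⟩, fun ⟨hlam, hG⟩ μ w => ?_⟩
  · have := h μ 0
    simp only [ZeroMemClass.coe_zero, map_zero, _root_.zero_apply] at this
    linarith
  · rw [hlam, hG]
    ring

theorem iSup_residual_le_of_saddle_point [FiniteDimensional ℝ Yd] (hb : b.IsSymm)
    (hpos : ∀ v, v ≠ 0 → 0 < b v v) {G : X →L[ℝ] StrongDual ℝ Y} {f : StrongDual ℝ Y}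
    {lam : Yd} {u : Xd} (hsaddle : ∀ (μ : Yd) (w : Xd), b lam μ + G u μ + G w lam = f μ)
    (w : Xd) :
    ⨆ v : {v : Yd // (v : Y) ≠ 0}, |(G u - f) (v : Y)| ^ 2 / b v v ≤
      ⨆ v : {v : Yd // (v : Y) ≠ 0}, |(G w - f) (v : Y)| ^ 2 / b v v := by
  obtain ⟨hlam, hG⟩ := (saddle_point_iff G f lam u).1 hsaddle
  let φ : Module.Dual ℝ Yd := f.toLinearMap ∘ₗ Yd.subtype
  set l := (b.toDual (nondegenerate_of_pos hpos)).symm (φ - restrictDual Xd Yd G w)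
  have hl : ∀ μ : Yd, b l μ = f μ - G w μ := fun μ => by simp [l, φ]
  rw [iSup_sq_residual_div_eq hb hpos hlam, iSup_sq_residual_div_eq hb hpos hl]
  exact (isPosSemidef_of_pos hb hpos).apply_self_le_of_saddle_point
    (A := restrictDual Xd Yd G) (φ := φ) hlam hG hl

end SaddlePoint

theorem discrete_minimizer_saddle_point_general
    {X Y : Type*}
    [NormedAddCommGroup X] [InnerProductSpace ℝ X]
    [NormedAddCommGroup Y] [InnerProductSpace ℝ Y]
    (G : X →L[ℝ] StrongDual ℝ Y) (f : StrongDual ℝ Y)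
    (Xd : Submodule ℝ X) (Yd : Submodule ℝ Y)
    [FiniteDimensional ℝ Yd]
    -- the scalar product ⟨·,·⟩_{Y^δ} on Y^δ
    (b : Yd →ₗ[ℝ] Yd →ₗ[ℝ] ℝ)
    (hbsymm : ∀ v w : Yd, b v w = b w v)
    (hbpos : ∀ v : Yd, (v : Y) ≠ 0 → 0 < b v v) :
    (∃ (ud : Xd) (lamd : Yd),
      (∀ w : Xd,
        (1/2) * (⨆ v : {v : Yd // (v : Y) ≠ 0},
            |(G ((ud : Xd) : X) - f) ((v : Yd) : Y)| ^ 2 / b (v : Yd) (v : Yd))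
        ≤ (1/2) * ⨆ v : {v : Yd // (v : Y) ≠ 0},
            |(G ((w : Xd) : X) - f) ((v : Yd) : Y)| ^ 2 / b (v : Yd) (v : Yd)) ∧
      -- λ^δ is the Riesz lift of (f − G u^δ)|_{Y^δ}
      (∀ μ : Yd, b lamd μ = f (μ : Y) - G ((ud : Xd) : X) (μ : Y)) ∧
      -- saddle point equations
      (∀ (μ : Yd) (w : Xd),
        b lamd μ + G ((ud : Xd) : X) (μ : Y) + G ((w : Xd) : X) ((lamd : Yd) : Y)
          = f (μ : Y))) ∧
    -- converse: the second component of any solution of the saddle point problem minimizes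
    (∀ (lamd : Yd) (ud : Xd),
      (∀ (μ : Yd) (w : Xd),
        b lamd μ + G ((ud : Xd) : X) (μ : Y) + G ((w : Xd) : X) ((lamd : Yd) : Y)
          = f (μ : Y)) →
      ∀ w : Xd,
        (1/2) * (⨆ v : {v : Yd // (v : Y) ≠ 0},
            |(G ((ud : Xd) : X) - f) ((v : Yd) : Y)| ^ 2 / b (v : Yd) (v : Yd))
        ≤ (1/2) * ⨆ v : {v : Yd // (v : Y) ≠ 0},
            |(G ((w : Xd) : X) - f) ((v : Yd) : Y)| ^ 2 / b (v : Yd) (v : Yd)) := by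
  have hb : LinearMap.BilinForm.IsSymm b := ⟨hbsymm⟩
  have hpos : ∀ v : Yd, v ≠ 0 → 0 < b v v := fun v hv => hbpos v (by simpa using hv)
  obtain ⟨ud, lamd, hlamd, hG⟩ := LinearMap.BilinForm.exists_saddle_point hb hpos
    (restrictDual Xd Yd G) (f.toLinearMap ∘ₗ Yd.subtype)
  have hsaddle := (saddle_point_iff G f lamd ud).2 ⟨hlamd, hG⟩
  refine ⟨⟨ud, lamd, fun w => ?_, hlamd, hsaddle⟩, fun _ _ hsaddle' w => ?_⟩
  · exact mul_le_mul_of_nonneg_left (iSup_residual_le_of_saddle_point hb hpos hsaddle w)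
      (by norm_num)
  · exact mul_le_mul_of_nonneg_left (iSup_residual_le_of_saddle_point hb hpos hsaddle' w)
      (by norm_num)

/-- Existence of the discretized residual minimizer, its saddle-point characterization with
the Riesz lift `λ^δ`, and conversely: any solution of the saddle point problem yields a
minimizer (under positivity of the discrete inf-sup constant). -/
theorem discrete_minimizer_saddle_point
    {X Y : Type*}
    [NormedAddCommGroup X] [InnerProductSpace ℝ X] [CompleteSpace X]
    [NormedAddCommGroup Y] [InnerProductSpace ℝ Y] [CompleteSpace Y]
    (G : X →L[ℝ] StrongDual ℝ Y) (f : StrongDual ℝ Y)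
    (Xd : Submodule ℝ X) (Yd : Submodule ℝ Y)
    [FiniteDimensional ℝ Xd] [FiniteDimensional ℝ Yd]
    (hXdbot : Xd ≠ ⊥) (hYdbot : Yd ≠ ⊥)
    -- the scalar product ⟨·,·⟩_{Y^δ} on Y^δ
    (b : Yd →ₗ[ℝ] Yd →ₗ[ℝ] ℝ)
    (hbsymm : ∀ v w : Yd, b v w = b w v)
    (hbpos : ∀ v : Yd, (v : Y) ≠ 0 → 0 < b v v)
    -- positivity of the discrete inf-sup constant
    (hγpos : 0 < ⨅ w : {w : Xd // (w : X) ≠ 0},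
        (⨆ v : {v : Yd // (v : Y) ≠ 0},
          |G ((w : Xd) : X) ((v : Yd) : Y)| / Real.sqrt (b (v : Yd) (v : Yd)))
        / ‖G ((w : Xd) : X)‖) :
    (∃ (ud : Xd) (lamd : Yd),
      (∀ w : Xd,
        (1/2) * (⨆ v : {v : Yd // (v : Y) ≠ 0},
            |(G ((ud : Xd) : X) - f) ((v : Yd) : Y)| ^ 2 / b (v : Yd) (v : Yd))
        ≤ (1/2) * ⨆ v : {v : Yd // (v : Y) ≠ 0},
            |(G ((w : Xd) : X) - f) ((v : Yd) : Y)| ^ 2 / b (v : Yd) (v : Yd)) ∧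
      -- λ^δ is the Riesz lift of (f − G u^δ)|_{Y^δ}
      (∀ μ : Yd, b lamd μ = f (μ : Y) - G ((ud : Xd) : X) (μ : Y)) ∧
      -- saddle point equations
      (∀ (μ : Yd) (w : Xd),
        b lamd μ + G ((ud : Xd) : X) (μ : Y) + G ((w : Xd) : X) ((lamd : Yd) : Y)
          = f (μ : Y))) ∧
    -- converse: the second component of any solution of the saddle point problem minimizes
    (∀ (lamd : Yd) (ud : Xd),
      (∀ (μ : Yd) (w : Xd),
        b lamd μ + G ((ud : Xd) : X) (μ : Y) + G ((w : Xd) : X) ((lamd : Yd) : Y)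
          = f (μ : Y)) →
      ∀ w : Xd,
        (1/2) * (⨆ v : {v : Yd // (v : Y) ≠ 0},
            |(G ((ud : Xd) : X) - f) ((v : Yd) : Y)| ^ 2 / b (v : Yd) (v : Yd))
        ≤ (1/2) * ⨆ v : {v : Yd // (v : Y) ≠ 0},
            |(G ((w : Xd) : X) - f) ((v : Yd) : Y)| ^ 2 / b (v : Yd) (v : Yd)) :=
  discrete_minimizer_saddle_point_general G f Xd Yd b hbsymm hbpos
end

section
/- If Y^δ = Y and X̂^δ = X in the 3×3 block system ⟨θ, τ⟩_X − (Gτ)(λ) = 0 (τ ∈ X), −(Gθ)(μ) − (Gu^δ)(μ) = −f(μ) (μ ∈ Y), −(Gw)(λ) = 0 (w ∈ X^δ), where G ∈ Lis(X, Y') and u = G⁻¹f, then u^δ is the best approximation to u from X^δ with respect to ‖·‖_X, and θ = u − u^δ. -/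
open NormedSpace RealInnerProductSpace

/-! The second block row says `G (θ + u^δ) = f`, i.e. `θ = u - u^δ`; the first and third rows then
give `⟪u - u^δ, w⟫ = 0` for `w ∈ X^δ`, and Galerkin orthogonality characterizes the best
approximation. -/

theorem Submodule.norm_sub_le_of_forall_inner_sub_eq_zero {F : Type*} [NormedAddCommGroup F]
    [InnerProductSpace ℝ F] (K : Submodule ℝ F) {u v w : F} (hv : v ∈ K) (hw : w ∈ K)
    (horth : ∀ x ∈ K, ⟪u - v, x⟫ = 0) : ‖u - v‖ ≤ ‖u - w‖ := by
  rw [(norm_eq_iInf_iff_real_inner_eq_zero K hv).2 horth]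
  exact ciInf_le ⟨0, by rintro _ ⟨x, rfl⟩; positivity⟩ (⟨w, hw⟩ : K)

theorem full_test_spaces_best_approximation_general
    {X Y : Type*}
    [NormedAddCommGroup X] [InnerProductSpace ℝ X]
    [NormedAddCommGroup Y] [InnerProductSpace ℝ Y]
    (G : X ≃L[ℝ] StrongDual ℝ Y) (f : StrongDual ℝ Y) (u : X) (hu : u = G.symm f)
    (Xd : Submodule ℝ X)
    (θ : X) (lam : Y) (ud : Xd)
    (h1 : ∀ τ : X, ⟪θ, τ⟫ - G τ lam = 0)
    (h2 : ∀ μ : Y, -(G θ μ) - G ((ud : Xd) : X) μ = -(f μ))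
    (h3 : ∀ w : Xd, -(G ((w : Xd) : X) lam) = 0) :
    θ = u - (ud : X) ∧ ∀ w : Xd, ‖u - (ud : X)‖ ≤ ‖u - (w : X)‖ := by
  have hGf : G (θ + ud) = f := by
    ext μ
    simp only [map_add, add_apply]
    linarith [h2 μ]
  have hθ : θ = u - ud := by
    rw [hu, ← hGf, ContinuousLinearEquiv.symm_apply_apply, add_sub_cancel_right]
  have horth : ∀ w ∈ Xd, ⟪u - ud, w⟫ = 0 := fun w hw => by
    rw [← hθ]
    linarith [h1 w, h3 ⟨w, hw⟩]
  exact ⟨hθ, fun w => Xd.norm_sub_le_of_forall_inner_sub_eq_zero ud.2 w.2 horth⟩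

/-- With `Y^δ = Y` and `X̂^δ = X` in the 3×3 block system, `u^δ` is the best approximation
to `u` from `X^δ` w.r.t. `‖·‖_X`, and `θ = u − u^δ`. -/
theorem full_test_spaces_best_approximation
    {X Y : Type*}
    [NormedAddCommGroup X] [InnerProductSpace ℝ X] [CompleteSpace X]
    [NormedAddCommGroup Y] [InnerProductSpace ℝ Y] [CompleteSpace Y]
    (G : X ≃L[ℝ] StrongDual ℝ Y) (f : StrongDual ℝ Y) (u : X) (hu : u = G.symm f)
    (Xd : Submodule ℝ X) (hXdclosed : IsClosed (Xd : Set X))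
    (θ : X) (lam : Y) (ud : Xd)
    (h1 : ∀ τ : X, ⟪θ, τ⟫ - G τ lam = 0)
    (h2 : ∀ μ : Y, -(G θ μ) - G ((ud : Xd) : X) μ = -(f μ))
    (h3 : ∀ w : Xd, -(G ((w : Xd) : X) lam) = 0) :
    θ = u - (ud : X) ∧ ∀ w : Xd, ‖u - (ud : X)‖ ≤ ‖u - (w : X)‖ :=
  full_test_spaces_best_approximation_general G f u hu Xd θ lam ud h1 h2 h3
end

section
/- A posteriori bounds: let G ∈ Lis(X, Y'), u = G⁻¹ f, and let (θ^δ, λ^δ, u^δ) ∈ X̂^δ × Y^δ × X^δ solve the 3×3 block system of the practical MINRES method with optimal test norm. Let Π^δ ∈ L(Y, Y^δ) be a Fortin interpolator with (G X^δ)(ran(Id − Π^δ)) = 0, and set osc^δ(f) := ‖G⁻¹ (Id − Π^δ)' f‖_X. Assume μ^δ > 0. Then μ^δ ‖θ^δ‖_X ≤ ‖u − u^δ‖_X ≤ ‖G' Π^δ (G')⁻¹‖_{L(X',X')} ‖θ^δ‖_X + osc^δ(f). -/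
open NormedSpace RealInnerProductSpace

/-!
The lower bound: the first and second block equations say that `θ^δ` is the Riesz representative
in `X̂^δ` of `G(·)λ^δ` and that `Gθ^δ` agrees with the residual `G(u - u^δ)` on `Y^δ`. Hence
`‖θ^δ‖² = (G(u - u^δ))(λ^δ) ≤ ‖G'λ^δ‖ ‖u - u^δ‖`, while the definition of `μ^δ` tested at `λ^δ`
gives `μ^δ ‖G'λ^δ‖ ≤ ‖θ^δ‖`.

The upper bound: by the Fortin property the residual splits as
`G(u - u^δ) = (Gθ^δ) ∘ Π^δ + f ∘ (Id - Π^δ)`. The second term gives the oscillation, and the first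
is `G⁻¹ (Π^δ)' G θ^δ`, whose norm is controlled, by duality, through its adjoint `G' Π^δ (G')⁻¹`.
-/

section InfSup

variable {X Y : Type*} [NormedAddCommGroup X] [InnerProductSpace ℝ X]
  [NormedAddCommGroup Y] [NormedSpace ℝ Y]

noncomputable def dualNormOn (V : Submodule ℝ X) (φ : StrongDual ℝ X) : ℝ :=
  ⨆ w : {w : V // (w : X) ≠ 0}, |φ w| / ‖(w : X)‖

/-- The constant `μ^δ`; `G.flip` is `G'`. -/
noncomputable def infSupConst (G : X →L[ℝ] StrongDual ℝ Y) (Xhat : Submodule ℝ X)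
    (Yd : Submodule ℝ Y) : ℝ :=
  ⨅ v : {v : Yd // (v : Y) ≠ 0}, dualNormOn Xhat (G.flip v) / ‖G.flip v‖

lemma dualNormOn_nonneg (V : Submodule ℝ X) (φ : StrongDual ℝ X) : 0 ≤ dualNormOn V φ :=
  Real.iSup_nonneg fun _ => div_nonneg (abs_nonneg _) (norm_nonneg _)

lemma dualNormOn_le_of_forall_eq_inner {V : Submodule ℝ X} {φ : StrongDual ℝ X} {θ : X}
    (hθ : ∀ τ ∈ V, φ τ = ⟪θ, τ⟫) : dualNormOn V φ ≤ ‖θ‖ := by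
  refine Real.iSup_le (fun w => ?_) (norm_nonneg θ)
  rw [div_le_iff₀ (norm_pos_iff.mpr w.2), hθ _ w.1.2]
  exact abs_real_inner_le_norm _ _

lemma infSupConst_le {G : X →L[ℝ] StrongDual ℝ Y} (Xhat : Submodule ℝ X) {Yd : Submodule ℝ Y}
    {v : Y} (hv : v ∈ Yd) (hv0 : v ≠ 0) :
    infSupConst G Xhat Yd ≤ dualNormOn Xhat (G.flip v) / ‖G.flip v‖ :=
  ciInf_le ⟨0, by
    rintro _ ⟨w, rfl⟩
    exact div_nonneg (dualNormOn_nonneg _ _) (norm_nonneg _)⟩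
    (⟨⟨v, hv⟩, hv0⟩ : {v : Yd // (v : Y) ≠ 0})

theorem infSupConst_mul_norm_le {G : X →L[ℝ] StrongDual ℝ Y} {Xhat : Submodule ℝ X}
    {Yd : Submodule ℝ Y} {θ e : X} {lam : Y} (hθ : θ ∈ Xhat) (hlam : lam ∈ Yd)
    (hriesz : ∀ τ ∈ Xhat, ⟪θ, τ⟫ = G τ lam) (hres : ∀ μ ∈ Yd, G θ μ = G e μ) :
    infSupConst G Xhat Yd * ‖θ‖ ≤ ‖e‖ := by
  have hsq : ‖θ‖ ^ 2 = G e lam := by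
    rw [← real_inner_self_eq_norm_sq, hriesz θ hθ, hres lam hlam]
  obtain rfl | hlam0 := eq_or_ne lam 0
  · have : θ = 0 := by simpa using hsq
    simp [this]
  have hbound : ‖θ‖ ^ 2 ≤ ‖e‖ * ‖G.flip lam‖ := by
    rw [hsq, mul_comm, ← G.flip_apply]
    exact (le_abs_self _).trans ((G.flip lam).le_opNorm e)
  have hdual : dualNormOn Xhat (G.flip lam) ≤ ‖θ‖ :=
    dualNormOn_le_of_forall_eq_inner fun τ hτ => (hriesz τ hτ).symm
  calc infSupConst G Xhat Yd * ‖θ‖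
      ≤ ‖θ‖ / ‖G.flip lam‖ * ‖θ‖ := by
        gcongr
        exact (infSupConst_le Xhat hlam hlam0).trans (by gcongr)
    _ = ‖θ‖ ^ 2 / ‖G.flip lam‖ := by ring
    _ ≤ ‖e‖ := div_le_of_le_mul₀ (norm_nonneg _) (norm_nonneg _) hbound

end InfSup

section Fortin

variable {𝕜 X Y : Type*} [RCLike 𝕜] [NormedAddCommGroup X] [NormedSpace 𝕜 X]
  [NormedAddCommGroup Y] [NormedSpace 𝕜 Y]

theorem apply_sub_eq_comp_add_comp (G : X →L[𝕜] StrongDual 𝕜 Y) {f : StrongDual 𝕜 Y}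
    {u ud θ : X} {Yd : Submodule 𝕜 Y} {Pid : Y →L[𝕜] Y} (hu : G u = f)
    (hPidran : ∀ v, Pid v ∈ Yd) (hFortin : ∀ v, G ud (v - Pid v) = 0)
    (hres : ∀ μ ∈ Yd, G θ μ = G (u - ud) μ) :
    G (u - ud) = (G θ).comp Pid + f.comp (ContinuousLinearMap.id 𝕜 Y - Pid) := by
  ext v
  calc G (u - ud) v = G (u - ud) (Pid v) + G (u - ud) (v - Pid v) := by
        rw [map_sub (G (u - ud)) v, add_sub_cancel]
    _ = G θ (Pid v) + f (v - Pid v) := by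
        rw [← hres _ (hPidran v), map_sub G u ud, sub_apply, hFortin, hu, sub_zero]
    _ = ((G θ).comp Pid + f.comp (ContinuousLinearMap.id 𝕜 Y - Pid)) v := rfl

/-- `G⁻¹ (Π)' G` is the adjoint of `G' Π (G')⁻¹`, so its norm is bounded by the latter's. -/
theorem norm_symm_comp_le (G : X ≃L[𝕜] StrongDual 𝕜 Y) (Gp : Y ≃L[𝕜] StrongDual 𝕜 X)
    (hGp : ∀ (v : Y) (x : X), Gp v x = G x v) (Pid : Y →L[𝕜] Y) (θ : X) :
    ‖G.symm ((G θ).comp Pid)‖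
      ≤ ‖(Gp : Y →L[𝕜] StrongDual 𝕜 X).comp (Pid.comp (Gp.symm : StrongDual 𝕜 X →L[𝕜] Y))‖
          * ‖θ‖ := by
  set T := (Gp : Y →L[𝕜] StrongDual 𝕜 X).comp (Pid.comp (Gp.symm : StrongDual 𝕜 X →L[𝕜] Y))
  refine norm_le_dual_bound 𝕜 _ (by positivity) fun φ => ?_
  have hdual : φ (G.symm ((G θ).comp Pid)) = T φ θ := by
    obtain ⟨v, rfl⟩ := Gp.surjective φ
    simp [T, hGp]
  rw [hdual, mul_right_comm]
  exact ((T φ).le_opNorm θ).trans (by gcongr; exact T.le_opNorm φ)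

end Fortin

theorem a_posteriori_bounds_general
    {X Y : Type*}
    [NormedAddCommGroup X] [InnerProductSpace ℝ X]
    [NormedAddCommGroup Y] [InnerProductSpace ℝ Y]
    (G : X ≃L[ℝ] StrongDual ℝ Y) (f : StrongDual ℝ Y) (u : X) (hu : G u = f)
    (Gp : Y ≃L[ℝ] StrongDual ℝ X)
    (hGp : ∀ (v : Y) (x : X), Gp v x = G x v)
    (Xd : Submodule ℝ X) (Yd : Submodule ℝ Y) (Xhat : Submodule ℝ X)
    -- the solution (θ^δ, λ^δ, u^δ) of the 3×3 block system
    (θd : Xhat) (lamd : Yd) (ud : Xd)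
    (h1 : ∀ τ : Xhat, ⟪((θd : Xhat) : X), ((τ : Xhat) : X)⟫
        - G ((τ : Xhat) : X) ((lamd : Yd) : Y) = 0)
    (h2 : ∀ μ : Yd, -(G ((θd : Xhat) : X) ((μ : Yd) : Y))
        - G ((ud : Xd) : X) ((μ : Yd) : Y) = -(f ((μ : Yd) : Y)))
    -- the Fortin interpolator
    (Pid : Y →L[ℝ] Y) (hPidran : ∀ v : Y, Pid v ∈ Yd)
    (hFortin : ∀ (w : Xd) (v : Y), G ((w : Xd) : X) (v - Pid v) = 0)
    (μd : ℝ)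
    (hμdef : μd = ⨅ v : {v : Yd // (v : Y) ≠ 0},
        (⨆ w : {w : Xhat // (w : X) ≠ 0},
          |G ((w : Xhat) : X) ((v : Yd) : Y)| / ‖((w : Xhat) : X)‖)
        / ‖Gp ((v : Yd) : Y)‖) :
    μd * ‖((θd : Xhat) : X)‖ ≤ ‖u - (ud : X)‖ ∧
    ‖u - (ud : X)‖
      ≤ ‖(Gp : Y →L[ℝ] StrongDual ℝ X).comp (Pid.comp (Gp.symm : StrongDual ℝ X →L[ℝ] Y))‖
          * ‖((θd : Xhat) : X)‖
        + ‖G.symm (f.comp (ContinuousLinearMap.id ℝ Y - Pid))‖ := by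
  have hres : ∀ μ ∈ Yd, G θd μ = G (u - ud) μ := fun μ hμ => by
    have := h2 ⟨μ, hμ⟩
    rw [map_sub, sub_apply, hu]
    linarith
  have hGp_eq : (Gp : Y →L[ℝ] StrongDual ℝ X) = (G : X →L[ℝ] StrongDual ℝ Y).flip := by
    ext v x
    exact hGp v x
  have hμ : μd = infSupConst (G : X →L[ℝ] StrongDual ℝ Y) Xhat Yd := by
    rw [hμdef, infSupConst, ← hGp_eq]
    simp only [dualNormOn, ContinuousLinearEquiv.coe_coe, hGp]
  constructor
  · rw [hμ]
    exact infSupConst_mul_norm_le θd.2 lamd.2 (fun τ hτ => sub_eq_zero.mp (h1 ⟨τ, hτ⟩)) hres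
  · have hsplit : G (u - ud) = (G θd).comp Pid + f.comp (ContinuousLinearMap.id ℝ Y - Pid) :=
      apply_sub_eq_comp_add_comp (G : X →L[ℝ] StrongDual ℝ Y) hu hPidran (hFortin ud) hres
    rw [← G.symm_apply_apply (u - ud), hsplit, map_add]
    exact (norm_add_le _ _).trans (add_le_add_left (norm_symm_comp_le G Gp hGp Pid θd) _)

/-- A posteriori bounds:
`μ^δ ‖θ^δ‖_X ≤ ‖u − u^δ‖_X ≤ ‖G' Π^δ (G')⁻¹‖ ‖θ^δ‖_X + osc^δ(f)`. -/
theorem a_posteriori_bounds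
    {X Y : Type*}
    [NormedAddCommGroup X] [InnerProductSpace ℝ X] [CompleteSpace X]
    [NormedAddCommGroup Y] [InnerProductSpace ℝ Y] [CompleteSpace Y]
    (G : X ≃L[ℝ] StrongDual ℝ Y) (f : StrongDual ℝ Y) (u : X) (hu : G u = f)
    (Gp : Y ≃L[ℝ] StrongDual ℝ X)
    (hGp : ∀ (v : Y) (x : X), Gp v x = G x v)
    (Xd : Submodule ℝ X) (Yd : Submodule ℝ Y) (Xhat : Submodule ℝ X)
    (hXdclosed : IsClosed (Xd : Set X)) (hYdclosed : IsClosed (Yd : Set Y))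
    (hXhatclosed : IsClosed (Xhat : Set X))
    (hXdbot : Xd ≠ ⊥) (hYdbot : Yd ≠ ⊥) (hXhatbot : Xhat ≠ ⊥)
    -- the solution (θ^δ, λ^δ, u^δ) of the 3×3 block system
    (θd : Xhat) (lamd : Yd) (ud : Xd)
    (h1 : ∀ τ : Xhat, ⟪((θd : Xhat) : X), ((τ : Xhat) : X)⟫
        - G ((τ : Xhat) : X) ((lamd : Yd) : Y) = 0)
    (h2 : ∀ μ : Yd, -(G ((θd : Xhat) : X) ((μ : Yd) : Y))
        - G ((ud : Xd) : X) ((μ : Yd) : Y) = -(f ((μ : Yd) : Y)))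
    (h3 : ∀ w : Xd, -(G ((w : Xd) : X) ((lamd : Yd) : Y)) = 0)
    -- the Fortin interpolator
    (Pid : Y →L[ℝ] Y) (hPidran : ∀ v : Y, Pid v ∈ Yd)
    (hFortin : ∀ (w : Xd) (v : Y), G ((w : Xd) : X) (v - Pid v) = 0)
    (μd : ℝ)
    (hμdef : μd = ⨅ v : {v : Yd // (v : Y) ≠ 0},
        (⨆ w : {w : Xhat // (w : X) ≠ 0},
          |G ((w : Xhat) : X) ((v : Yd) : Y)| / ‖((w : Xhat) : X)‖)
        / ‖Gp ((v : Yd) : Y)‖)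
    (hμpos : 0 < μd) :
    μd * ‖((θd : Xhat) : X)‖ ≤ ‖u - (ud : X)‖ ∧
    ‖u - (ud : X)‖
      ≤ ‖(Gp : Y →L[ℝ] StrongDual ℝ X).comp (Pid.comp (Gp.symm : StrongDual ℝ X →L[ℝ] Y))‖
          * ‖((θd : Xhat) : X)‖
        + ‖G.symm (f.comp (ContinuousLinearMap.id ℝ Y - Pid))‖ :=
  a_posteriori_bounds_general G f u hu Gp hGp Xd Yd Xhat θd lamd ud h1 h2 Pid hPidran hFortin μd
    hμdef
end

section
/- Oscillation bound: with Π^δ the Fortin projector satisfying ‖G' Π^δ (G')⁻¹‖_{L(X',X')} = 1/γ^δ, it holds that osc^δ(f) := ‖G⁻¹(Id − Π^δ)' f‖_X ≤ (1/γ^δ) · inf over w^δ ∈ X^δ of ‖u − w^δ‖_X, where u = G⁻¹ f. -/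
/-!
Write `B := G⁻¹ Π' G`, so that `G (B x) v = G x (Π v)`. Then `B` is idempotent, it fixes `X^δ` by
the Fortin property, its Banach adjoint is `G' Π (G')⁻¹`, whence `‖B‖ = 1/γ^δ`, and
`G⁻¹ (Id − Π)' f = (Id − B)(u − w^δ)` for every `w^δ ∈ X^δ`. Kato's inequality `‖x − B x‖ ≤ ‖B‖ ‖x‖`
for nonzero idempotents on an inner product space gives the bound. It follows by splitting
`x = w + v` with `w = B x`, `v = x − B x` and applying `B` to `(‖v‖/‖w‖) w + (‖w‖/‖v‖) v`, a vector of
the same norm as `x` that `B` maps to a vector of norm `‖v‖`.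
-/

lemma one_le_norm_of_isIdempotentElem {R : Type*} [NormedRing R] {e : R}
    (he : IsIdempotentElem e) (he0 : e ≠ 0) : 1 ≤ ‖e‖ := by
  have hpos : 0 < ‖e‖ := norm_pos_iff.mpr he0
  have : ‖e‖ * 1 ≤ ‖e‖ * ‖e‖ := by
    simpa only [mul_one, he.eq] using norm_mul_le e e
  exact le_of_mul_le_mul_left this hpos

section Kato

variable {H : Type*} [NormedAddCommGroup H] [InnerProductSpace ℝ H]

lemma norm_rescale_add_eq_norm_add {v w : H} (hv : v ≠ 0) (hw : w ≠ 0) :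
    ‖(‖v‖ / ‖w‖) • w + (‖w‖ / ‖v‖) • v‖ = ‖w + v‖ := by
  have hv' : ‖v‖ ≠ 0 := norm_ne_zero_iff.mpr hv
  have hw' : ‖w‖ ≠ 0 := norm_ne_zero_iff.mpr hw
  rw [← sq_eq_sq₀ (norm_nonneg _) (norm_nonneg _), norm_add_sq_real, norm_add_sq_real,
    real_inner_smul_left, real_inner_smul_right, norm_smul, norm_smul, Real.norm_eq_abs,
    Real.norm_eq_abs, abs_div, abs_div, abs_norm, abs_norm]
  field_simp
  ring

theorem ContinuousLinearMap.norm_sub_apply_le_of_isIdempotentElem {P : H →L[ℝ] H}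
    (hP : IsIdempotentElem P) (hP0 : P ≠ 0) (x : H) : ‖x - P x‖ ≤ ‖P‖ * ‖x‖ := by
  set v := x - P x
  set w := P x
  have hPw : P w = w := congrArg (fun T : H →L[ℝ] H => T x) hP.eq
  have hPv : P v = 0 := by rw [map_sub, hPw, sub_self]
  rcases eq_or_ne v 0 with hv | hv
  · rw [hv, norm_zero]; positivity
  rcases eq_or_ne w 0 with hw | hw
  · have hx : v = x := by simp only [v, w] at hw ⊢; rw [hw, sub_zero]
    rw [hx]
    exact le_mul_of_one_le_left (norm_nonneg x) (one_le_norm_of_isIdempotentElem hP hP0)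
  set y := (‖v‖ / ‖w‖) • w + (‖w‖ / ‖v‖) • v
  have hPy : ‖P y‖ = ‖v‖ := by
    rw [map_add, map_smul, map_smul, hPw, hPv, smul_zero, add_zero, norm_smul, Real.norm_eq_abs,
      abs_div, abs_norm, abs_norm, div_mul_cancel₀ _ (norm_ne_zero_iff.mpr hw)]
  have hy : ‖y‖ = ‖x‖ := by
    rw [norm_rescale_add_eq_norm_add hv hw, add_sub_cancel]
  calc ‖v‖ = ‖P y‖ := hPy.symm
    _ ≤ ‖P‖ * ‖y‖ := P.le_opNorm y
    _ = ‖P‖ * ‖x‖ := by rw [hy]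

end Kato

theorem ContinuousLinearMap.opNorm_eq_of_dual_apply_eq {𝕜 E F : Type*} [RCLike 𝕜]
    [NormedAddCommGroup E] [NormedSpace 𝕜 E] [NormedAddCommGroup F] [NormedSpace 𝕜 F]
    {B : E →L[𝕜] F} {A : StrongDual 𝕜 F →L[𝕜] StrongDual 𝕜 E}
    (hAB : ∀ h x, A h x = h (B x)) : ‖B‖ = ‖A‖ := by
  refine le_antisymm (B.opNorm_le_bound (norm_nonneg A) fun x => ?_)
    (A.opNorm_le_bound (norm_nonneg B) fun h => ?_)
  · refine NormedSpace.norm_le_dual_bound 𝕜 (B x) (by positivity) fun h => ?_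
    calc ‖h (B x)‖ = ‖A h x‖ := by rw [hAB]
      _ ≤ ‖A‖ * ‖h‖ * ‖x‖ := A.le_opNorm₂ h x
      _ = ‖A‖ * ‖x‖ * ‖h‖ := by ring
  · refine (A h).opNorm_le_bound (by positivity) fun x => ?_
    calc ‖A h x‖ = ‖h (B x)‖ := by rw [hAB]
      _ ≤ ‖h‖ * ‖B x‖ := h.le_opNorm (B x)
      _ ≤ ‖h‖ * (‖B‖ * ‖x‖) := by gcongr; exact B.le_opNorm x
      _ = ‖B‖ * ‖h‖ * ‖x‖ := by ring

section Transpose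

variable {𝕜 X Y : Type*} [NontriviallyNormedField 𝕜]
  [NormedAddCommGroup X] [NormedSpace 𝕜 X] [NormedAddCommGroup Y] [NormedSpace 𝕜 Y]

noncomputable def transposeConj (G : X ≃L[𝕜] StrongDual 𝕜 Y) (P : Y →L[𝕜] Y) : X →L[𝕜] X :=
  (G.symm : StrongDual 𝕜 Y →L[𝕜] X).comp
    ((ContinuousLinearMap.precomp 𝕜 P).comp (G : X →L[𝕜] StrongDual 𝕜 Y))

variable (G : X ≃L[𝕜] StrongDual 𝕜 Y) (P : Y →L[𝕜] Y)

@[simp]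
lemma apply_transposeConj_apply (x : X) (v : Y) : G (transposeConj G P x) v = G x (P v) := by
  simp [transposeConj]

lemma isIdempotentElem_transposeConj (hP : IsIdempotentElem P) :
    IsIdempotentElem (transposeConj G P) := by
  ext x : 1
  refine G.injective (ContinuousLinearMap.ext fun v => ?_)
  change G (transposeConj G P (transposeConj G P x)) v = G (transposeConj G P x) v
  simp only [apply_transposeConj_apply]
  exact congrArg (G x) (congrArg (fun T : Y →L[𝕜] Y => T v) hP.eq)

lemma transposeConj_apply_eq_self {w : X} (hw : ∀ v, G w (v - P v) = 0) :
    transposeConj G P w = w := by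
  refine G.injective (ContinuousLinearMap.ext fun v => ?_)
  rw [apply_transposeConj_apply, ← sub_eq_zero, ← map_sub, ← neg_sub, map_neg, hw, neg_zero]

lemma symm_comp_id_sub (f : StrongDual 𝕜 Y) :
    G.symm (f.comp (ContinuousLinearMap.id 𝕜 Y - P)) = G.symm f - transposeConj G P (G.symm f) := by
  rw [G.symm_apply_eq]
  ext v
  simp

lemma conj_apply_eq_apply_transposeConj (Gp : Y ≃L[𝕜] StrongDual 𝕜 X) (hGp : ∀ v x, Gp v x = G x v)
    (h : StrongDual 𝕜 X) (x : X) :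
    ((Gp : Y →L[𝕜] StrongDual 𝕜 X).comp (P.comp (Gp.symm : StrongDual 𝕜 X →L[𝕜] Y))) h x
      = h (transposeConj G P x) := by
  obtain ⟨y, rfl⟩ := Gp.surjective h
  simp [hGp]

end Transpose

theorem oscillation_bound_general
    {X Y : Type*}
    [NormedAddCommGroup X] [InnerProductSpace ℝ X]
    [NormedAddCommGroup Y] [InnerProductSpace ℝ Y]
    (G : X ≃L[ℝ] StrongDual ℝ Y) (f : StrongDual ℝ Y) (u : X) (hu : u = G.symm f)
    (Gp : Y ≃L[ℝ] StrongDual ℝ X)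
    (hGp : ∀ (v : Y) (x : X), Gp v x = G x v)
    (Xd : Submodule ℝ X) (Yd : Submodule ℝ Y)
    -- Π^δ is a projector onto Y^δ ...
    (Pid : Y →L[ℝ] Y) (hPidran : ∀ v : Y, Pid v ∈ Yd) (hPidproj : ∀ v : Yd, Pid v = v)
    -- ... with the Fortin property
    (hFortin : ∀ (w : Xd) (v : Y), G ((w : Xd) : X) (v - Pid v) = 0)
    (γd : ℝ) (hγpos : 0 < γd)
    (hnorm : ‖(Gp : Y →L[ℝ] StrongDual ℝ X).comp (Pid.comp (Gp.symm : StrongDual ℝ X →L[ℝ] Y))‖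
        = 1 / γd) :
    ‖G.symm (f.comp (ContinuousLinearMap.id ℝ Y - Pid))‖
      ≤ (1 / γd) * ⨅ w : Xd, ‖u - (w : X)‖ := by
  set B := transposeConj G Pid
  have hPid : IsIdempotentElem Pid := ContinuousLinearMap.ext fun v => hPidproj ⟨Pid v, hPidran v⟩
  have hB : IsIdempotentElem B := isIdempotentElem_transposeConj G Pid hPid
  have hBnorm : ‖B‖ = 1 / γd :=
    hnorm ▸ ContinuousLinearMap.opNorm_eq_of_dual_apply_eq (conj_apply_eq_apply_transposeConj G Pid Gp hGp)
  have hB0 : B ≠ 0 := by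
    rintro hB0
    rw [hB0, norm_zero] at hBnorm
    exact (one_div_pos.mpr hγpos).ne hBnorm
  have hosc : ∀ w : Xd, ‖G.symm (f.comp (ContinuousLinearMap.id ℝ Y - Pid))‖
      ≤ 1 / γd * ‖u - (w : X)‖ := by
    intro w
    have hBw : B w = w := transposeConj_apply_eq_self G Pid (hFortin w)
    rw [symm_comp_id_sub, ← hu, ← hBnorm,
      show u - B u = (u - w) - B (u - w) by rw [map_sub, hBw]; abel]
    exact ContinuousLinearMap.norm_sub_apply_le_of_isIdempotentElem hB hB0 _
  rw [Real.mul_iInf_of_nonneg (by positivity)]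
  exact le_ciInf hosc

/-- Oscillation bound: with `Π^δ` the Fortin projector satisfying
`‖G' Π^δ (G')⁻¹‖ = 1/γ^δ`, it holds that `osc^δ(f) ≤ (1/γ^δ) inf_{w^δ∈X^δ} ‖u − w^δ‖_X`. -/
theorem oscillation_bound
    {X Y : Type*}
    [NormedAddCommGroup X] [InnerProductSpace ℝ X] [CompleteSpace X]
    [NormedAddCommGroup Y] [InnerProductSpace ℝ Y] [CompleteSpace Y]
    (G : X ≃L[ℝ] StrongDual ℝ Y) (f : StrongDual ℝ Y) (u : X) (hu : u = G.symm f)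
    (Gp : Y ≃L[ℝ] StrongDual ℝ X)
    (hGp : ∀ (v : Y) (x : X), Gp v x = G x v)
    (Xd : Submodule ℝ X) (Yd : Submodule ℝ Y)
    (hXdclosed : IsClosed (Xd : Set X)) (hYdclosed : IsClosed (Yd : Set Y))
    -- Π^δ is a projector onto Y^δ ...
    (Pid : Y →L[ℝ] Y) (hPidran : ∀ v : Y, Pid v ∈ Yd) (hPidproj : ∀ v : Yd, Pid v = v)
    -- ... with the Fortin property
    (hFortin : ∀ (w : Xd) (v : Y), G ((w : Xd) : X) (v - Pid v) = 0)
    (γd : ℝ) (hγpos : 0 < γd)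
    (hnorm : ‖(Gp : Y →L[ℝ] StrongDual ℝ X).comp (Pid.comp (Gp.symm : StrongDual ℝ X →L[ℝ] Y))‖
        = 1 / γd) :
    ‖G.symm (f.comp (ContinuousLinearMap.id ℝ Y - Pid))‖
      ≤ (1 / γd) * ⨅ w : Xd, ‖u - (w : X)‖ :=
  oscillation_bound_general G f u hu Gp hGp Xd Yd Pid hPidran hPidproj hFortin γd hγpos hnorm
end

section
/- Nonintrusive approach error bound: let G = (F, T) ∈ Lis(X, Y₁' × Y₂'), u = G⁻¹(f, g), X^δ ⊂ X with X₀^δ := X^δ ∩ ker T. Suppose g^δ = T v^δ for some v^δ ∈ X^δ, and z^δ ∈ X₀^δ satisfies ‖z − z^δ‖_X ≤ C inf over w ∈ X₀^δ of ‖z − w‖_X, where z ∈ ker T solves G z = (f − F v^δ, 0). Then ‖u − (z^δ + v^δ)‖_X ≤ C · inf over {w ∈ X^δ : T w = g^δ} of ‖u − w‖_X + (1 + C) ‖G⁻¹‖ · ‖g − g^δ‖_{Y₂'}. -/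
/-!
Since `G (z + v^δ) = (f, T v^δ) = (f, g^δ)`, the error of the lifted
continuous solution is `u − (z + v^δ) = G⁻¹(0, g − g^δ)`, of norm at most `‖G⁻¹‖ ‖g − g^δ‖`.
Translating by `v^δ` maps `X₀^δ` onto the affine set `{w ∈ X^δ : T w = g^δ}`, so the best
approximation error of `z` from `X₀^δ` is that of `z + v^δ` from this affine set, which differs from
the best approximation error of `u` by at most `‖u − (z + v^δ)‖`. The triangle inequality
`‖u − (z^δ + v^δ)‖ ≤ ‖u − (z + v^δ)‖ + ‖z − z^δ‖` then gives the bound.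
-/

section Approximation

variable {𝕜 X Y : Type*} [Ring 𝕜] [SeminormedAddCommGroup X] [Module 𝕜 X]

theorem iInf_norm_sub_le_iInf_norm_sub_add {ι : Type*} [Nonempty ι] (f : ι → X) (x y : X) :
    ⨅ i, ‖x - f i‖ ≤ (⨅ i, ‖y - f i‖) + ‖x - y‖ := by
  have hbdd : BddBelow (Set.range fun i => ‖x - f i‖) :=
    ⟨0, by rintro _ ⟨i, rfl⟩; exact norm_nonneg _⟩
  rw [← sub_le_iff_le_add]
  refine le_ciInf fun i => sub_le_iff_le_add.2 ?_
  calc ⨅ i, ‖x - f i‖ ≤ ‖x - f i‖ := ciInf_le hbdd i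
    _ ≤ ‖x - y‖ + ‖y - f i‖ := norm_sub_le_norm_sub_add_norm_sub x y (f i)
    _ = ‖y - f i‖ + ‖x - y‖ := add_comm _ _

theorem iInf_norm_sub_inf_ker_le_iInf_norm_sub_affine [TopologicalSpace Y] [AddCommGroup Y]
    [Module 𝕜 Y] (S : Submodule 𝕜 X) (T : X →L[𝕜] Y) (v : S) (y : Y) (hv : T v = y) (x : X) :
    ⨅ w : ↥(S ⊓ LinearMap.ker (T : X →ₗ[𝕜] Y)), ‖x - (w : X)‖
      ≤ ⨅ w : {w : S // T w = y}, ‖x + v - ((w : S) : X)‖ := by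
  have : Nonempty {w : S // T w = y} := ⟨⟨v, hv⟩⟩
  have hbdd : BddBelow (Set.range fun w : ↥(S ⊓ LinearMap.ker (T : X →ₗ[𝕜] Y)) => ‖x - (w : X)‖) :=
    ⟨0, by rintro _ ⟨w, rfl⟩; exact norm_nonneg _⟩
  refine le_ciInf fun w => ?_
  have hmem : ((w : S) : X) - v ∈ S ⊓ LinearMap.ker (T : X →ₗ[𝕜] Y) :=
    ⟨S.sub_mem (w : S).2 v.2, by simp [w.2, hv]⟩
  calc ⨅ w : ↥(S ⊓ LinearMap.ker (T : X →ₗ[𝕜] Y)), ‖x - (w : X)‖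
      ≤ ‖x - (((w : S) : X) - v)‖ := ciInf_le hbdd ⟨_, hmem⟩
    _ = ‖x + v - ((w : S) : X)‖ := by rw [sub_sub_eq_add_sub]

end Approximation

section BlockOperator

variable {𝕜 X A B : Type*} [NontriviallyNormedField 𝕜]
  [NormedAddCommGroup X] [NormedSpace 𝕜 X] [NormedAddCommGroup A] [NormedSpace 𝕜 A]
  [NormedAddCommGroup B] [NormedSpace 𝕜 B]

theorem ContinuousLinearMap.norm_apply_zero_prod_le (L : A × B →L[𝕜] X) (b : B) :
    ‖L (0, b)‖ ≤ ‖L‖ * ‖b‖ :=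
  (L.le_opNorm _).trans_eq (by simp)

theorem ContinuousLinearEquiv.symm_sub_symm_sub_add_eq (G : X ≃L[𝕜] A × B) (F : X →L[𝕜] A)
    (T : X →L[𝕜] B) (hG : ∀ x, G x = (F x, T x)) (f : A) (g : B) (v : X) :
    G.symm (f, g) - (G.symm (f - F v, 0) + v) = G.symm (0, g - T v) := by
  apply G.injective
  rw [map_sub, map_add, G.apply_symm_apply, G.apply_symm_apply, G.apply_symm_apply, hG]
  ext <;> simp

end BlockOperator

theorem nonintrusive_error_bound_general
    {X Y1 Y2 : Type*}
    [NormedAddCommGroup X] [InnerProductSpace ℝ X]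
    [NormedAddCommGroup Y1] [InnerProductSpace ℝ Y1]
    [NormedAddCommGroup Y2] [InnerProductSpace ℝ Y2]
    (F : X →L[ℝ] StrongDual ℝ Y1) (T : X →L[ℝ] StrongDual ℝ Y2)
    (G : X ≃L[ℝ] (StrongDual ℝ Y1 × StrongDual ℝ Y2))
    (hG : ∀ x : X, G x = (F x, T x))
    (f : StrongDual ℝ Y1) (g : StrongDual ℝ Y2)
    (u : X) (hu : u = G.symm (f, g))
    (Xd : Submodule ℝ X)
    (C : ℝ) (hC : 0 < C)
    (vd : Xd) (gd : StrongDual ℝ Y2) (hgd : T ((vd : Xd) : X) = gd)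
    (z : X) (hz : z = G.symm (f - F ((vd : Xd) : X), 0))
    (zd : Xd)
    (hzdopt : ‖z - (zd : X)‖
      ≤ C * ⨅ w : ↥(Xd ⊓ LinearMap.ker (T : X →ₗ[ℝ] StrongDual ℝ Y2)), ‖z - (w : X)‖) :
    ‖u - ((zd : X) + (vd : X))‖
      ≤ C * (⨅ w : {w : Xd // T ((w : Xd) : X) = gd}, ‖u - (((w : {w : Xd // T ((w : Xd) : X) = gd}) : Xd) : X)‖)
        + (1 + C) * ‖(G.symm : (StrongDual ℝ Y1 × StrongDual ℝ Y2) →L[ℝ] X)‖ * ‖g - gd‖ := by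
  set K := ‖(G.symm : (StrongDual ℝ Y1 × StrongDual ℝ Y2) →L[ℝ] X)‖ * ‖g - gd‖
  have hlift : ‖u - (z + vd)‖ ≤ K := by
    rw [hu, hz, G.symm_sub_symm_sub_add_eq F T hG, hgd]
    exact (G.symm : (StrongDual ℝ Y1 × StrongDual ℝ Y2) →L[ℝ] X).norm_apply_zero_prod_le _
  have : Nonempty {w : Xd // T ((w : Xd) : X) = gd} := ⟨⟨vd, hgd⟩⟩
  have hbest : ⨅ w : ↥(Xd ⊓ LinearMap.ker (T : X →ₗ[ℝ] StrongDual ℝ Y2)), ‖z - (w : X)‖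
      ≤ (⨅ w : {w : Xd // T ((w : Xd) : X) = gd}, ‖u - ((w : Xd) : X)‖) + K :=
    calc _ ≤ ⨅ w : {w : Xd // T ((w : Xd) : X) = gd}, ‖z + vd - ((w : Xd) : X)‖ :=
          iInf_norm_sub_inf_ker_le_iInf_norm_sub_affine Xd T vd gd hgd z
      _ ≤ _ := iInf_norm_sub_le_iInf_norm_sub_add _ _ u
      _ ≤ _ := by rw [norm_sub_rev]; gcongr
  calc ‖u - ((zd : X) + (vd : X))‖ ≤ ‖u - (z + vd)‖ + ‖z - zd‖ := by
        simpa only [add_sub_add_right_eq_sub] using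
          norm_sub_le_norm_sub_add_norm_sub u (z + vd) (zd + vd)
    _ ≤ K + C * ((⨅ w : {w : Xd // T ((w : Xd) : X) = gd}, ‖u - ((w : Xd) : X)‖) + K) :=
        add_le_add hlift (hzdopt.trans (mul_le_mul_of_nonneg_left hbest hC.le))
    _ = _ := by ring

/-- Nonintrusive approach error bound:
`‖u − (z^δ + v^δ)‖ ≤ C inf_{Tw = g^δ} ‖u − w‖ + (1+C)‖G⁻¹‖‖g − g^δ‖`. -/
theorem nonintrusive_error_bound
    {X Y1 Y2 : Type*}
    [NormedAddCommGroup X] [InnerProductSpace ℝ X] [CompleteSpace X]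
    [NormedAddCommGroup Y1] [InnerProductSpace ℝ Y1] [CompleteSpace Y1]
    [NormedAddCommGroup Y2] [InnerProductSpace ℝ Y2] [CompleteSpace Y2]
    (F : X →L[ℝ] StrongDual ℝ Y1) (T : X →L[ℝ] StrongDual ℝ Y2)
    (G : X ≃L[ℝ] (StrongDual ℝ Y1 × StrongDual ℝ Y2))
    (hG : ∀ x : X, G x = (F x, T x))
    (f : StrongDual ℝ Y1) (g : StrongDual ℝ Y2)
    (u : X) (hu : u = G.symm (f, g))
    (Xd : Submodule ℝ X) (hXdclosed : IsClosed (Xd : Set X))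
    (C : ℝ) (hC : 0 < C)
    (vd : Xd) (gd : StrongDual ℝ Y2) (hgd : T ((vd : Xd) : X) = gd)
    (z : X) (hz : z = G.symm (f - F ((vd : Xd) : X), 0))
    (zd : Xd) (hzd0 : T ((zd : Xd) : X) = 0)
    (hzdopt : ‖z - (zd : X)‖
      ≤ C * ⨅ w : ↥(Xd ⊓ LinearMap.ker (T : X →ₗ[ℝ] StrongDual ℝ Y2)), ‖z - (w : X)‖) :
    ‖u - ((zd : X) + (vd : X))‖
      ≤ C * (⨅ w : {w : Xd // T ((w : Xd) : X) = gd}, ‖u - (((w : {w : Xd // T ((w : Xd) : X) = gd}) : Xd) : X)‖)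
        + (1 + C) * ‖(G.symm : (StrongDual ℝ Y1 × StrongDual ℝ Y2) →L[ℝ] X)‖ * ‖g - gd‖ :=
  nonintrusive_error_bound_general F T G hG f g u hu Xd C hC vd gd hgd z hz zd hzdopt
end
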